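/- arXiv:2403.06982 — 5 statements merged into one kernel-verified Lean document; each statement's English description precedes it below -/
import Mathlib

section
/- A countable infinite group G is residually finite if and only if there exists a free G-odometer, i.e., a decreasing sequence (Γₙ)ₙ of finite index subgroups such that the translation action of G on lim← G/Γₙ is free. -/
/-!
Enumerating `G` and intersecting, for the first `n + 1` elements, finite index normal subgroups
that avoid them gives a decreasing chain of finite index normal subgroups with trivial
intersection. For normal subgroups the stabilizer of every point of the odometer is the
intersection of the chain, so the odometer is free. Conversely, the stabilizer of the point
`(Γₙ)ₙ` is `⋂ₙ Γₙ`, so freeness puts every `g ≠ 1` outside some `Γₙ`, and the normal core of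
that `Γₙ` separates `g` from `1`.
-/

def odometerSet {G : Type*} [Group G] (Γ : ℕ → Subgroup G) : Set (Π n, G ⧸ Γ n) :=
  {z | ∀ (n : ℕ) (g : G), z (n + 1) = (g : G ⧸ Γ (n + 1)) → z n = (g : G ⧸ Γ n)}

section Odometer

variable {G : Type*} [Group G]

theorem smul_eq_self_iff_mem_of_normal {N : Subgroup G} [N.Normal] {h : G} {q : G ⧸ N} :
    h • q = q ↔ h ∈ N := by
  induction q using QuotientGroup.induction_on with
  | H x =>
    rw [MulAction.Quotient.smul_mk, smul_eq_mul, QuotientGroup.mk_mul, mul_eq_right,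
      QuotientGroup.eq_one_iff]

theorem mk_mem_odometerSet {Γ : ℕ → Subgroup G} (hΓ : ∀ n, Γ (n + 1) ≤ Γ n) (x : G) :
    (fun n => (x : G ⧸ Γ n)) ∈ odometerSet Γ := by
  intro n g hg
  rw [QuotientGroup.eq] at hg ⊢
  exact hΓ n hg

theorem smul_mk_one_eq_self_iff {Γ : ℕ → Subgroup G} {h : G} :
    h • (fun n => ((1 : G) : G ⧸ Γ n)) = (fun n => ((1 : G) : G ⧸ Γ n)) ↔ ∀ n, h ∈ Γ n := by
  rw [funext_iff]
  simp only [Pi.smul_apply, ← MulAction.mem_stabilizer_iff, MulAction.stabilizer_quotient]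

theorem exists_antitone_normal_finiteIndex_of_residuallyFinite [Countable G]
    (hres : ∀ g : G, g ≠ 1 → ∃ N : Subgroup G, N.Normal ∧ N.FiniteIndex ∧ g ∉ N) :
    ∃ Γ : ℕ → Subgroup G, (∀ n, (Γ n).Normal) ∧ (∀ n, (Γ n).FiniteIndex) ∧
      (∀ n, Γ (n + 1) ≤ Γ n) ∧ ∀ g, (∀ n, g ∈ Γ n) → g = 1 := by
  obtain ⟨e, he⟩ := exists_surjective_nat G
  have hsep : ∀ g : G, ∃ N : Subgroup G, N.Normal ∧ N.FiniteIndex ∧ (g ≠ 1 → g ∉ N) := by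
    intro g
    by_cases hg : g = 1
    · exact ⟨⊤, inferInstance, inferInstance, absurd hg⟩
    · obtain ⟨N, hnormal, hfin, hgN⟩ := hres g hg
      exact ⟨N, hnormal, hfin, fun _ => hgN⟩
  choose N hnormal hfin hsep using hsep
  refine ⟨fun n => ⨅ k : Fin (n + 1), N (e k), fun n => ?_, fun n => ?_, fun n => ?_, ?_⟩
  · exact Subgroup.normal_iInf_normal fun k => hnormal _
  · exact Subgroup.finiteIndex_iInf fun k => hfin _
  · exact le_iInf fun k => iInf_le _ k.castSucc
  · intro g hg
    by_contra hne
    obtain ⟨k, rfl⟩ := he g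
    exact hsep _ hne (Subgroup.mem_iInf.mp (hg k) (Fin.last k))

end Odometer

theorem stmt_6_general {G : Type*} [Group G] [Countable G] :
    (∀ g : G, g ≠ 1 → ∃ N : Subgroup G, N.Normal ∧ N.FiniteIndex ∧ g ∉ N) ↔
    ∃ Γ : ℕ → Subgroup G, (∀ n, (Γ n).FiniteIndex) ∧ (∀ n, Γ (n + 1) ≤ Γ n) ∧
      ∀ z ∈ odometerSet Γ, ∀ h : G, h • z = z → h = 1 := by
  constructor
  · intro hres
    obtain ⟨Γ, hnormal, hfin, hdec, htrivial⟩ :=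
      exists_antitone_normal_finiteIndex_of_residuallyFinite hres
    refine ⟨Γ, hfin, hdec, fun z _ h hz => htrivial h fun n => ?_⟩
    have := hnormal n
    exact smul_eq_self_iff_mem_of_normal.mp (congrFun hz n)
  · rintro ⟨Γ, hfin, hdec, hfree⟩ g hg
    obtain ⟨n, hn⟩ : ∃ n, g ∉ Γ n := by
      by_contra! hmem
      exact hg (hfree _ (mk_mem_odometerSet hdec 1) g (smul_mk_one_eq_self_iff.mpr hmem))
    have := hfin n
    exact ⟨(Γ n).normalCore, inferInstance, inferInstance, fun hg' => hn ((Γ n).normalCore_le hg')⟩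

/-- a countable infinite group is residually finite iff there exists a free
G-odometer, i.e. a decreasing sequence of finite index subgroups such that the
translation action on the inverse limit is free. -/
theorem stmt_6 {G : Type*} [Group G] [Countable G] [Infinite G] :
    (∀ g : G, g ≠ 1 → ∃ N : Subgroup G, N.Normal ∧ N.FiniteIndex ∧ g ∉ N) ↔
    ∃ Γ : ℕ → Subgroup G, (∀ n, (Γ n).FiniteIndex) ∧ (∀ n, Γ (n + 1) ≤ Γ n) ∧
      ∀ z ∈ odometerSet Γ, ∀ h : G, h • z = z → h = 1 :=
  stmt_6_general
end

section
/- Let G be a countable group, Z = lim← G/Γₙ a G-odometer with unique invariant probability measure ν, and (Dₙ)ₙ sets of right-coset representatives of G/Γₙ (Dₙ ⊆ Dₙ₊₁, ⋃ₙDₙ = G). If an increasing sequence (nᵢ) of indices satisfies |D_{n_{i-1}}|/|D_{n_i}| < 1/2^{i+1} for all i, then the set Z₀ = {(tₙΓₙ)ₙ ∈ Z : G = ⋃ᵢ t_{nᵢ}Γ_{nᵢ}D_{n_{i-1}}} has ν(Z₀) = 0. -/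
/-
Specialising the defining property of `Z₀` to `g = 1` shows that `Z₀` is covered by the cylinders
`d⁻¹ C_{n_{j+1}}` with `d ∈ D_{n_j}`, whose total mass is at most
`∑ⱼ |D_{n_j}| / |D_{n_{j+1}}| ≤ ∑ⱼ 2^{-(j+2)} = 1/2`. On the other hand `Z₀` is a measurable
`G`-invariant subset of the odometer, so `ν` conditioned on `Z₀` would be another invariant
probability measure; by unique ergodicity `ν(Z₀)` is `0` or `1`, hence `0`.
-/

open MeasureTheory

instance odQuotMeasurable {G : Type*} [Group G] (Γ : Subgroup G) :
    MeasurableSpace (G ⧸ Γ) := ⊤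

open ProbabilityTheory Finset
open scoped ENNReal

theorem measure_eq_zero_or_one_of_unique_invariant {G X : Type*} [MeasurableSpace X]
    [SMul G X] {ν : Measure X} [IsFiniteMeasure ν] {S A : Set X}
    (hsmul : ∀ g : G, Measurable (g • · : X → X))
    (hinv : ∀ g : G, Measure.map (g • ·) ν = ν)
    (huniq : ∀ ν' : Measure X, IsProbabilityMeasure ν' → ν' S = 1 →
      (∀ g : G, Measure.map (g • ·) ν' = ν') → ν' = ν)
    (hA : MeasurableSet A) (hAS : A ⊆ S) (hAinv : ∀ g : G, (g • ·) ⁻¹' A = A) :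
    ν A = 0 ∨ ν A = 1 := by
  refine or_iff_not_imp_left.mpr fun hA₀ => ?_
  have hA₁ : ν[A | A] = 1 := cond_apply_self hA₀ (measure_ne_top ν A)
  have : IsProbabilityMeasure ν[|A] := cond_isProbabilityMeasure hA₀
  have hcond : ν[|A] = ν := by
    refine huniq _ this (le_antisymm prob_le_one (hA₁ ▸ measure_mono hAS)) fun g => ?_
    have hrestrict : Measure.map (g • ·) (ν.restrict A) = ν.restrict A := by
      conv_lhs => rw [← hAinv g]
      rw [← Measure.restrict_map (hsmul g) hA, hinv g]
    rw [ProbabilityTheory.cond, Measure.map_smul, hrestrict]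
  rwa [hcond] at hA₁

theorem MeasureTheory.measure_iUnion_biUnion_finset_le {α ι κ : Type*} [MeasurableSpace α]
    [Countable ι] (μ : Measure α) (s : ι → Finset κ) (S : ι → κ → Set α) {c : ι → ℝ≥0∞}
    (hS : ∀ i, ∀ k ∈ s i, μ (S i k) ≤ c i) :
    μ (⋃ i, ⋃ k ∈ s i, S i k) ≤ ∑' i, #(s i) * c i :=
  calc μ (⋃ i, ⋃ k ∈ s i, S i k)
      ≤ ∑' i, μ (⋃ k ∈ s i, S i k) := measure_iUnion_le _
    _ ≤ ∑' i, ∑ k ∈ s i, μ (S i k) := ENNReal.tsum_le_tsum fun i => measure_biUnion_finset_le _ _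
    _ ≤ ∑' i, #(s i) * c i := ENNReal.tsum_le_tsum fun i => by
        simpa only [sum_const, nsmul_eq_mul] using sum_le_sum (hS i)

theorem ENNReal.tsum_inv_two_pow_add_two : ∑' j : ℕ, (2⁻¹ : ℝ≥0∞) ^ (j + 2) = 2⁻¹ := by
  simp_rw [pow_add, ENNReal.tsum_mul_right, ENNReal.tsum_geometric_two]
  rw [sq, ← mul_assoc, ENNReal.mul_inv_cancel two_ne_zero ENNReal.ofNat_ne_top, one_mul]

theorem ENNReal.natCast_div_le_inv_two_pow {a b k : ℕ} (hb : 0 < b)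
    (h : (a : ℝ) / b < 1 / 2 ^ k) : (a : ℝ≥0∞) / b ≤ 2⁻¹ ^ k := by
  have := ENNReal.ofReal_le_ofReal h.le
  rw [ENNReal.ofReal_div_of_pos (by positivity)] at this
  simpa [ENNReal.inv_pow] using this

namespace Odometer

variable {G : Type*} [Group G] {Γ : ℕ → Subgroup G}

/-- The basic clopen set `gCₙ`. -/
def cylinder (Γ : ℕ → Subgroup G) (n : ℕ) (g : G) : Set (Π n, G ⧸ Γ n) :=
  {z | z ∈ odometerSet Γ ∧ z n = (g : G ⧸ Γ n)}

/-- The set `Z₀`. -/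
def coverSet (Γ : ℕ → Subgroup G) (D : ℕ → Finset G) (nseq : ℕ → ℕ) : Set (Π n, G ⧸ Γ n) :=
  {z | z ∈ odometerSet Γ ∧ ∀ g : G, ∃ i : ℕ, 1 ≤ i ∧ ∃ t γ d : G,
    (t : G ⧸ Γ (nseq i)) = z (nseq i) ∧ γ ∈ Γ (nseq i) ∧ d ∈ D (nseq (i - 1)) ∧ g = t * γ * d}

theorem measurable_comp_eval {β : Type*} [MeasurableSpace β] (n : ℕ) (f : G ⧸ Γ n → β) :
    Measurable fun z : Π m, G ⧸ Γ m => f (z n) :=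
  measurable_from_top.comp (measurable_pi_apply n)

theorem measurable_const_smul (g : G) : Measurable (g • · : (Π n, G ⧸ Γ n) → Π n, G ⧸ Γ n) :=
  measurable_pi_lambda _ fun n => measurable_comp_eval n (g • ·)

theorem smul_mem_odometerSet (g : G) {z : Π n, G ⧸ Γ n} (hz : z ∈ odometerSet Γ) :
    g • z ∈ odometerSet Γ := by
  intro n h hh
  have hzn := hz n (g⁻¹ * h) (eq_inv_smul_iff.mpr hh : z (n + 1) = g⁻¹ • (h : G ⧸ Γ (n + 1)))
  rw [Pi.smul_apply, hzn]
  exact congrArg QuotientGroup.mk (mul_inv_cancel_left g h)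

theorem smul_mem_coverSet {D : ℕ → Finset G} {nseq : ℕ → ℕ} (g : G) {z : Π n, G ⧸ Γ n}
    (hz : z ∈ coverSet Γ D nseq) : g • z ∈ coverSet Γ D nseq := by
  refine ⟨smul_mem_odometerSet g hz.1, fun g' => ?_⟩
  obtain ⟨i, hi, t, γ, d, ht, hγ, hd, hg'⟩ := hz.2 (g⁻¹ * g')
  refine ⟨i, hi, g * t, γ, d, ?_, hγ, hd, ?_⟩
  · rw [Pi.smul_apply, ← ht]; rfl
  · rw [mul_assoc, mul_assoc, ← mul_assoc t, ← hg', mul_inv_cancel_left]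

theorem preimage_smul_coverSet (D : ℕ → Finset G) (nseq : ℕ → ℕ) (g : G) :
    (g • ·) ⁻¹' coverSet Γ D nseq = coverSet Γ D nseq :=
  Set.ext fun _ => ⟨fun h => by simpa using smul_mem_coverSet g⁻¹ h, smul_mem_coverSet g⟩

theorem coverSet_subset_iUnion_cylinder (D : ℕ → Finset G) (nseq : ℕ → ℕ) :
    coverSet Γ D nseq ⊆ ⋃ j, ⋃ d ∈ D (nseq j), cylinder Γ (nseq (j + 1)) d⁻¹ := by
  rintro z ⟨hz, hcover⟩
  obtain ⟨i, hi, t, γ, d, ht, hγ, hd, h1⟩ := hcover 1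
  obtain ⟨j, rfl⟩ : ∃ j, i = j + 1 := ⟨i - 1, by omega⟩
  have ht' : t = d⁻¹ * γ⁻¹ := by
    rw [mul_assoc, eq_comm, mul_eq_one_iff_eq_inv, mul_inv_rev] at h1; exact h1
  rw [Nat.add_sub_cancel] at hd
  refine Set.mem_iUnion.mpr ⟨j, Set.mem_iUnion₂.mpr ⟨d, hd, hz, ?_⟩⟩
  rw [← ht, ht', QuotientGroup.mk_mul_of_mem _ (inv_mem hγ)]

variable [Countable G]

theorem measurableSet_odometerSet : MeasurableSet (odometerSet Γ) :=
  measurableSet_setOfPred.mpr <| Measurable.forall fun n => Measurable.forall fun _ =>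
    (measurable_comp_eval (n + 1) (· = _)).imp (measurable_comp_eval n (· = _))

theorem measurableSet_coverSet (D : ℕ → Finset G) (nseq : ℕ → ℕ) :
    MeasurableSet (coverSet Γ D nseq) := by
  refine measurableSet_odometerSet.inter (measurableSet_setOfPred.mpr ?_)
  refine Measurable.forall fun g => Measurable.exists fun i => measurable_const.and ?_
  refine Measurable.exists fun t => Measurable.exists fun γ => Measurable.exists fun d => ?_
  exact (measurable_comp_eval _ (_ = ·)).and measurable_const

end Odometer

open Odometer in
theorem stmt_7_general {G : Type*} [Group G] [Countable G]
    (Γ : ℕ → Subgroup G)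
    (D : ℕ → Finset G)
    -- each Dₘ contains exactly one representative of each right coset Γₘg
    (hreps : ∀ (m : ℕ) (g : G), ∃! d : G, d ∈ D m ∧ d * g⁻¹ ∈ Γ m)
    (ν : Measure (Π n, G ⧸ Γ n)) (hprob : IsProbabilityMeasure ν)
    (hinv : ∀ g : G, Measure.map (fun z : Π n, G ⧸ Γ n => g • z) ν = ν)
    -- ν gives every basic clopen set gCₙ its natural mass 1/[G : Γₙ] = 1/|Dₙ|
    (hval : ∀ (g : G) (n : ℕ),
      ν {z | z ∈ odometerSet Γ ∧ z n = (g : G ⧸ Γ n)} = 1 / ((D n).card : ENNReal))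
    -- ν is the unique invariant probability measure on the odometer
    (huniq : ∀ ν' : Measure (Π n, G ⧸ Γ n), IsProbabilityMeasure ν' →
      ν' (odometerSet Γ) = 1 →
      (∀ g : G, Measure.map (fun z : Π n, G ⧸ Γ n => g • z) ν' = ν') → ν' = ν)
    (nseq : ℕ → ℕ)
    (hratio : ∀ i : ℕ, 1 ≤ i →
      ((D (nseq (i - 1))).card : ℝ) / ((D (nseq i)).card : ℝ) < 1 / 2 ^ (i + 1)) :
    ν {z | z ∈ odometerSet Γ ∧ ∀ g : G, ∃ i : ℕ, 1 ≤ i ∧ ∃ t γ d : G,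
        (t : G ⧸ Γ (nseq i)) = z (nseq i) ∧ γ ∈ Γ (nseq i) ∧ d ∈ D (nseq (i - 1)) ∧
        g = t * γ * d} = 0 := by
  change ν (coverSet Γ D nseq) = 0
  have hcard : ∀ m, 0 < #(D m) := fun m => by
    obtain ⟨d, ⟨hd, -⟩, -⟩ := hreps m 1
    exact card_pos.mpr ⟨d, hd⟩
  have hhalf : ν (coverSet Γ D nseq) ≤ 2⁻¹ :=
    calc ν (coverSet Γ D nseq)
        ≤ ν (⋃ j, ⋃ d ∈ D (nseq j), cylinder Γ (nseq (j + 1)) d⁻¹) :=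
          measure_mono (coverSet_subset_iUnion_cylinder D nseq)
      _ ≤ ∑' j, (#(D (nseq j)) : ℝ≥0∞) * (1 / #(D (nseq (j + 1)))) :=
          measure_iUnion_biUnion_finset_le ν _ _ fun j d _ => (hval d⁻¹ _).le
      _ ≤ ∑' j : ℕ, (2⁻¹ : ℝ≥0∞) ^ (j + 2) := ENNReal.tsum_le_tsum fun j => by
          have hj := hratio (j + 1) j.succ_pos
          rw [Nat.add_sub_cancel] at hj
          rw [mul_one_div]
          exact ENNReal.natCast_div_le_inv_two_pow (hcard _) hj
      _ = 2⁻¹ := ENNReal.tsum_inv_two_pow_add_two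
  refine (measure_eq_zero_or_one_of_unique_invariant Odometer.measurable_const_smul hinv huniq
    (measurableSet_coverSet D nseq) (fun _ hz => hz.1)
    (preimage_smul_coverSet D nseq)).resolve_right fun h1 => ?_
  rw [h1] at hhalf
  norm_num at hhalf

/-- if (nᵢ) satisfies |D_{n_{i-1}}|/|D_{n_i}| < 1/2^{i+1}, then the set
Z₀ = {(tₙΓₙ)ₙ : G = ⋃ᵢ t_{nᵢ}Γ_{nᵢ}D_{n_{i-1}}} is ν-null for the unique invariant
probability measure ν of the odometer. -/
theorem stmt_7 {G : Type*} [Group G] [Countable G]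
    (Γ : ℕ → Subgroup G) (hdec : ∀ n, Γ (n + 1) ≤ Γ n) (hfi : ∀ n, (Γ n).FiniteIndex)
    (D : ℕ → Finset G)
    -- each Dₘ contains exactly one representative of each right coset Γₘg
    (hreps : ∀ (m : ℕ) (g : G), ∃! d : G, d ∈ D m ∧ d * g⁻¹ ∈ Γ m)
    (hDmono : ∀ m, D m ⊆ D (m + 1))
    (hDunion : (⋃ m : ℕ, (D m : Set G)) = Set.univ)
    (ν : Measure (Π n, G ⧸ Γ n)) (hprob : IsProbabilityMeasure ν)
    (hsupp : ν (odometerSet Γ) = 1)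
    (hinv : ∀ g : G, Measure.map (fun z : Π n, G ⧸ Γ n => g • z) ν = ν)
    -- ν gives every basic clopen set gCₙ its natural mass 1/[G : Γₙ] = 1/|Dₙ|
    (hval : ∀ (g : G) (n : ℕ),
      ν {z | z ∈ odometerSet Γ ∧ z n = (g : G ⧸ Γ n)} = 1 / ((D n).card : ENNReal))
    -- ν is the unique invariant probability measure on the odometer
    (huniq : ∀ ν' : Measure (Π n, G ⧸ Γ n), IsProbabilityMeasure ν' →
      ν' (odometerSet Γ) = 1 →
      (∀ g : G, Measure.map (fun z : Π n, G ⧸ Γ n => g • z) ν' = ν') → ν' = ν)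
    (nseq : ℕ → ℕ) (hmono : StrictMono nseq)
    (hratio : ∀ i : ℕ, 1 ≤ i →
      ((D (nseq (i - 1))).card : ℝ) / ((D (nseq i)).card : ℝ) < 1 / 2 ^ (i + 1)) :
    ν {z | z ∈ odometerSet Γ ∧ ∀ g : G, ∃ i : ℕ, 1 ≤ i ∧ ∃ t γ d : G,
        (t : G ⧸ Γ (nseq i)) = z (nseq i) ∧ γ ∈ Γ (nseq i) ∧ d ∈ D (nseq (i - 1)) ∧
        g = t * γ * d} = 0 :=
  stmt_7_general Γ D hreps ν hprob hinv hval huniq nseq hratio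
end

section
/- Let G be a countable group and (X,G) a Cantor dynamical system with no invariant Borel probability measures. Then there exists a subshift (Z,G) over a finite alphabet, which is a topological factor of (X,G), and which has no invariant Borel probability measures. Moreover, if (X,G) is minimal then (Z,G) is minimal. -/
open MeasureTheory

/-- The shift action of `G` on `G → A`: `(g • y)(h) = y(g⁻¹h)`. -/
def shiftAct {G A : Type*} [Group G] (g : G) (y : G → A) : G → A :=
  fun h => y (g⁻¹ * h)

section Aux

open Set TopologicalSpace NNReal ENNReal

variable {X : Type*} [MetricSpace X] [CompactSpace X] [TotallyDisconnectedSpace X]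

/-- Compact subset of an open set is contained in a clopen subset of it. -/
lemma aux_clopen_between {K U : Set X} (hK : IsCompact K) (hU : IsOpen U) (hKU : K ⊆ U) :
    ∃ C : Set X, IsClopen C ∧ K ⊆ C ∧ C ⊆ U := by
  have hx : ∀ x ∈ K, ∃ C : Set X, IsClopen C ∧ x ∈ C ∧ C ⊆ U := fun x hx =>
    compact_exists_isClopen_in_isOpen hU (hKU hx)
  choose! C hC hxC hCU using hx
  obtain ⟨t, htK, htfin, hcov⟩ := hK.elim_finite_subcover_image
    (fun x hx => (hC x hx).isOpen) (by intro x hx; exact mem_biUnion hx (hxC x hx))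
  refine ⟨⋃ x ∈ t, C x, htfin.isClopen_biUnion (fun x hxt => hC x (htK hxt)), hcov, ?_⟩
  intro y hy; simp only [mem_iUnion] at hy; obtain ⟨x, hxt, hyx⟩ := hy
  exact hCU x (htK hxt) hyx

lemma aux_borel_eq_clopen [MeasurableSpace X] [BorelSpace X] :
    (‹MeasurableSpace X› : MeasurableSpace X) = .generateFrom {C : Set X | IsClopen C} := by
  rw [BorelSpace.measurable_eq (α := X), borel]
  refine le_antisymm (MeasurableSpace.generateFrom_le ?_) (MeasurableSpace.generateFrom_le ?_)
  · intro U hU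
    have hU' : U = ⋃ C : {C : Set X // IsClopen C ∧ C ⊆ U}, (C : Set X) := by
      apply Subset.antisymm
      · intro x hx
        obtain ⟨C, hC, hxC, hCU⟩ := compact_exists_isClopen_in_isOpen hU hx
        exact mem_iUnion.2 ⟨⟨C, hC, hCU⟩, hxC⟩
      · exact iUnion_subset fun C => C.2.2
    obtain ⟨T, hTc, hTU⟩ := TopologicalSpace.isOpen_iUnion_countable
      (fun C : {C : Set X // IsClopen C ∧ C ⊆ U} => (C : Set X)) (fun C => C.2.1.isOpen)
    rw [hU', ← hTU]
    exact MeasurableSet.biUnion hTc fun C _ =>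
      MeasurableSpace.measurableSet_generateFrom C.2.1
  · intro C hC
    exact MeasurableSpace.measurableSet_generateFrom hC.isOpen

/-- A nonnegative, finitely additive, normalized function on clopen sets extends to a
Borel probability measure. -/
lemma aux_charge_extension [MeasurableSpace X] [BorelSpace X] (m : Set X → ℝ)
    (h0 : ∀ C : Set X, IsClopen C → 0 ≤ m C)
    (h1 : m Set.univ = 1)
    (hadd : ∀ C D : Set X, IsClopen C → IsClopen D → Disjoint C D → m (C ∪ D) = m C + m D) :
    ∃ μ : Measure X, IsProbabilityMeasure μ ∧
      ∀ C : Set X, IsClopen C → μ C = ENNReal.ofReal (m C) := by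
  classical
  have hmono : ∀ C D : Set X, IsClopen C → IsClopen D → C ⊆ D → m C ≤ m D := by
    intro C D hC hD hCD
    have hdiff : IsClopen (D \ C) := hD.diff hC
    have : m (C ∪ D \ C) = m C + m (D \ C) :=
      hadd C (D \ C) hC hdiff disjoint_sdiff_self_right
    rw [Set.union_diff_cancel hCD] at this
    linarith [h0 _ hdiff]
  set lam : Compacts X → ℝ≥0 :=
    fun K => sInf ((fun C => (m C).toNNReal) '' {C : Set X | IsClopen C ∧ (K : Set X) ⊆ C})
    with hlam
  have hne : ∀ K : Compacts X,
      ((fun C => (m C).toNNReal) '' {C : Set X | IsClopen C ∧ (K : Set X) ⊆ C}).Nonempty :=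
    fun K => ⟨(m Set.univ).toNNReal, ⟨Set.univ, ⟨isClopen_univ, subset_univ _⟩, rfl⟩⟩
  have hlam_le : ∀ (K : Compacts X) (C : Set X), IsClopen C → (K : Set X) ⊆ C →
      lam K ≤ (m C).toNNReal := fun K C hC hKC => csInf_le (OrderBot.bddBelow _) ⟨C, ⟨hC, hKC⟩, rfl⟩
  have hlam_ge : ∀ (K : Compacts X) (r : ℝ≥0),
      (∀ C : Set X, IsClopen C → (K : Set X) ⊆ C → r ≤ (m C).toNNReal) → r ≤ lam K := by
    intro K r hr
    exact le_csInf (hne K) (by rintro b ⟨C, ⟨hC, hKC⟩, rfl⟩; exact hr C hC hKC)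
  have hlam_mono : ∀ K₁ K₂ : Compacts X, (K₁ : Set X) ⊆ K₂ → lam K₁ ≤ lam K₂ := by
    intro K₁ K₂ h
    exact hlam_ge K₂ _ (fun C hC hKC => hlam_le K₁ C hC (h.trans hKC))
  have hlam_clopen : ∀ (K : Compacts X), IsClopen (K : Set X) →
      lam K = (m (K : Set X)).toNNReal := by
    intro K hK
    refine le_antisymm (hlam_le K _ hK Subset.rfl) (hlam_ge K _ ?_)
    intro C hC hKC
    exact Real.toNNReal_mono (hmono _ _ hK hC hKC)
  have hlam_suple : ∀ K₁ K₂ : Compacts X, lam (K₁ ⊔ K₂) ≤ lam K₁ + lam K₂ := by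
    intro K₁ K₂
    refine le_of_forall_pos_le_add ?_
    intro ε hε
    obtain ⟨r₁, hr₁m, hr₁⟩ :=
      exists_lt_of_csInf_lt (hne K₁) (lt_add_of_pos_right (lam K₁) (half_pos hε))
    obtain ⟨r₂, hr₂m, hr₂⟩ :=
      exists_lt_of_csInf_lt (hne K₂) (lt_add_of_pos_right (lam K₂) (half_pos hε))
    obtain ⟨C₁, ⟨hC₁, hKC₁⟩, rfl⟩ := hr₁m
    obtain ⟨C₂, ⟨hC₂, hKC₂⟩, rfl⟩ := hr₂m
    have hsub : m (C₁ ∪ C₂) ≤ m C₁ + m C₂ := by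
      have : m (C₁ ∪ C₂ \ C₁) = m C₁ + m (C₂ \ C₁) :=
        hadd C₁ (C₂ \ C₁) hC₁ (hC₂.diff hC₁) disjoint_sdiff_self_right
      rw [Set.union_diff_self] at this
      have := hmono (C₂ \ C₁) C₂ (hC₂.diff hC₁) hC₂ diff_subset
      linarith
    have h1' : lam (K₁ ⊔ K₂) ≤ (m (C₁ ∪ C₂)).toNNReal :=
      hlam_le _ _ (hC₁.union hC₂) (union_subset_union hKC₁ hKC₂)
    have h2 : (m (C₁ ∪ C₂)).toNNReal ≤ (m C₁).toNNReal + (m C₂).toNNReal := by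
      rw [← Real.toNNReal_add (h0 _ hC₁) (h0 _ hC₂)]
      exact Real.toNNReal_mono hsub
    calc lam (K₁ ⊔ K₂) ≤ (m C₁).toNNReal + (m C₂).toNNReal := h1'.trans h2
      _ ≤ (lam K₁ + ε/2) + (lam K₂ + ε/2) := add_le_add hr₁.le hr₂.le
      _ = lam K₁ + lam K₂ + (ε/2 + ε/2) := by ring
      _ = lam K₁ + lam K₂ + ε := by rw [add_halves]
  have hlam_disj : ∀ K₁ K₂ : Compacts X, Disjoint (K₁ : Set X) K₂ →
      lam (K₁ ⊔ K₂) = lam K₁ + lam K₂ := by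
    intro K₁ K₂ hdisj
    refine le_antisymm (hlam_suple K₁ K₂) ?_
    obtain ⟨C₀, hC₀, hK₁C₀, hC₀K₂⟩ :=
      aux_clopen_between K₁.2 (isOpen_compl_iff.2 K₂.2.isClosed) hdisj.subset_compl_right
    refine hlam_ge _ _ ?_
    intro D hD hKD
    have hK₁ : (K₁ : Set X) ⊆ D ∩ C₀ :=
      subset_inter ((subset_union_left).trans hKD) hK₁C₀
    have hK₂ : (K₂ : Set X) ⊆ D ∩ C₀ᶜ :=
      subset_inter ((subset_union_right).trans hKD) (Set.subset_compl_comm.mp hC₀K₂)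
    have e1 : lam K₁ ≤ (m (D ∩ C₀)).toNNReal := hlam_le _ _ (hD.inter hC₀) hK₁
    have e2 : lam K₂ ≤ (m (D ∩ C₀ᶜ)).toNNReal := hlam_le _ _ (hD.inter hC₀.compl) hK₂
    have hDeq : m (D ∩ C₀) + m (D ∩ C₀ᶜ) = m D := by
      rw [← hadd _ _ (hD.inter hC₀) (hD.inter hC₀.compl)
        (Disjoint.mono inter_subset_right inter_subset_right disjoint_compl_right)]
      rw [Set.inter_union_compl]
    calc lam K₁ + lam K₂ ≤ (m (D ∩ C₀)).toNNReal + (m (D ∩ C₀ᶜ)).toNNReal := add_le_add e1 e2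
      _ = (m D).toNNReal := by
          rw [← Real.toNNReal_add (h0 _ (hD.inter hC₀)) (h0 _ (hD.inter hC₀.compl)), hDeq]
  set kappa : Content X :=
    { toFun := lam
      mono' := hlam_mono
      sup_disjoint' := fun K₁ K₂ hd _ _ => hlam_disj K₁ K₂ hd
      sup_le' := hlam_suple } with hkappa
  set mu : Measure X := kappa.measure with hmu
  have hmu_clopen : ∀ C : Set X, IsClopen C → mu C = ENNReal.ofReal (m C) := by
    intro C hC
    have hCcpt : IsCompact C := hC.isClosed.isCompact
    have h1' : mu C = kappa.outerMeasure C := Content.measure_apply _ hC.isOpen.measurableSet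
    rw [h1', kappa.outerMeasure_of_isOpen C hC.isOpen]
    have : kappa.innerContent ⟨C, hC.isOpen⟩ = (lam ⟨C, hCcpt⟩ : ℝ≥0∞) := by
      refine le_antisymm ?_ ?_
      · refine iSup₂_le fun K hK => ?_
        exact ENNReal.coe_le_coe.2 (hlam_mono K ⟨C, hCcpt⟩ hK)
      · exact le_iSup₂ (f := fun (K : Compacts X)
          (_ : (K : Set X) ⊆ (⟨C, hC.isOpen⟩ : Opens X)) =>
          (kappa K : ℝ≥0∞)) (⟨C, hCcpt⟩ : Compacts X) Subset.rfl
    rw [this, hlam_clopen ⟨C, hCcpt⟩ hC]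
    rfl
  have hprob : IsProbabilityMeasure mu := by
    constructor
    rw [hmu_clopen Set.univ isClopen_univ, h1, ENNReal.ofReal_one]
  exact ⟨mu, hprob, hmu_clopen⟩

/-- The compact set of normalized nonnegative finitely additive set functions. -/
def chargeSet (X : Type*) [TopologicalSpace X] : Set (Set X → ℝ) :=
  {m | (∀ S : Set X, m S ∈ Set.Icc (0:ℝ) 1) ∧ m Set.univ = 1 ∧
    ∀ C D : Set X, IsClopen C → IsClopen D → Disjoint C D → m (C ∪ D) = m C + m D}

lemma isCompact_chargeSet {X : Type*} [TopologicalSpace X] : IsCompact (chargeSet X) := by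
  have heq : chargeSet X = (Set.univ.pi fun _ : Set X => Set.Icc (0:ℝ) 1) ∩
      ({m : Set X → ℝ | m Set.univ = 1} ∩
        ⋂ (C : Set X) (D : Set X) (_ : IsClopen C) (_ : IsClopen D) (_ : Disjoint C D),
          {m : Set X → ℝ | m (C ∪ D) = m C + m D}) := by
    ext m
    constructor
    · rintro ⟨ha, hb, hc⟩
      exact ⟨fun S _ => ha S, hb, Set.mem_iInter.2 fun C => Set.mem_iInter.2 fun D =>
        Set.mem_iInter.2 fun hC => Set.mem_iInter.2 fun hD => Set.mem_iInter.2 fun hdisj =>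
          hc C D hC hD hdisj⟩
    · rintro ⟨ha, hb, hc⟩
      refine ⟨fun S => ha S (Set.mem_univ S), hb, fun C D hC hD hdisj => ?_⟩
      exact Set.mem_iInter.1 (Set.mem_iInter.1 (Set.mem_iInter.1 (Set.mem_iInter.1
        (Set.mem_iInter.1 hc C) D) hC) hD) hdisj
  rw [heq]
  refine IsCompact.inter_right (isCompact_univ_pi fun _ => isCompact_Icc) ?_
  refine IsClosed.inter (isClosed_eq (continuous_apply _) continuous_const) ?_
  refine isClosed_iInter fun C => isClosed_iInter fun D => isClosed_iInter fun _ =>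
    isClosed_iInter fun _ => isClosed_iInter fun _ => ?_
  exact isClosed_eq (continuous_apply (C ∪ D)) ((continuous_apply C).add (continuous_apply D))

lemma mem_chargeSet_of_prob {X : Type*} [TopologicalSpace X] [MeasurableSpace X] [BorelSpace X]
    (ν : Measure X) (hν : IsProbabilityMeasure ν) :
    (fun S : Set X => (ν S).toReal) ∈ chargeSet X := by
  refine ⟨fun S => ⟨ENNReal.toReal_nonneg, ?_⟩, by simp, ?_⟩
  · have : ν S ≤ 1 := prob_le_one
    calc (ν S).toReal ≤ (1 : ℝ≥0∞).toReal := ENNReal.toReal_mono ENNReal.one_ne_top this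
      _ = 1 := by simp
  · intro C D hC hD hdisj
    show (ν (C ∪ D)).toReal = (ν C).toReal + (ν D).toReal
    rw [measure_union hdisj hD.isOpen.measurableSet,
      ENNReal.toReal_add (measure_ne_top _ _) (measure_ne_top _ _)]

end Aux

section StepA

open Set

variable {G X : Type*} [Group G] [MetricSpace X] [CompactSpace X]
  [TotallyDisconnectedSpace X] [Nonempty X]
  [MeasurableSpace X] [BorelSpace X] [MulAction G X]

/-- If there is no invariant measure, then there is a finite continuous coloring such that no
probability measure is invariant along it. -/
lemma aux_exists_good_partition
    (hcont : ∀ g : G, Continuous fun x : X => g • x)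
    (hnomeas : ¬ ∃ μ : Measure X, IsProbabilityMeasure μ ∧
      ∀ g : G, Measure.map (fun x : X => g • x) μ = μ) :
    ∃ (k : ℕ) (f : X → Fin (k + 1)), Continuous f ∧
      ¬ ∃ ν : Measure X, IsProbabilityMeasure ν ∧
        ∀ (g : G) (T : Set (Fin (k + 1))),
          ν ((fun x : X => g • x) ⁻¹' (f ⁻¹' T)) = ν (f ⁻¹' T) := by
  classical
  by_contra hno
  push_neg at hno
  -- FIP over all continuous finite colorings
  set ι := Σ k : ℕ, {f : X → Fin (k + 1) // Continuous f} with hι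
  set Ts : ι → Set (Set X → ℝ) := fun i =>
    ⋂ (g : G) (T : Set (Fin (i.1 + 1))),
      {m : Set X → ℝ | m ((fun x : X => g • x) ⁻¹' (i.2.1 ⁻¹' T)) = m (i.2.1 ⁻¹' T)} with hTs
  have hTsclosed : ∀ i, IsClosed (Ts i) := fun i =>
    isClosed_iInter fun g => isClosed_iInter fun T =>
      isClosed_eq (continuous_apply _) (continuous_apply _)
  have hfin : ∀ u : Finset ι, (chargeSet X ∩ ⋂ i ∈ u, Ts i).Nonempty := by
    intro u
    haveI : Nonempty (∀ i : u, Fin ((i : ι).1 + 1)) := ⟨fun _ => 0⟩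
    obtain ⟨N, hN⟩ := Nat.exists_eq_succ_of_ne_zero
      (Fintype.card_ne_zero (α := ∀ i : u, Fin ((i : ι).1 + 1)))
    set e : (∀ i : u, Fin ((i : ι).1 + 1)) ≃ Fin (N + 1) :=
      (Fintype.equivFin _).trans (finCongr hN) with he
    set F : X → Fin (N + 1) := fun x => e fun i => (i : ι).2.1 x with hF
    have hFc : Continuous F := by
      have h1 : Continuous fun x : X => (fun i => (i : ι).2.1 x : ∀ i : u, Fin ((i : ι).1 + 1)) :=
        continuous_pi fun i => (i : ι).2.2
      exact Continuous.comp continuous_of_discreteTopology h1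
    obtain ⟨ν, hν, hνp⟩ := hno N F hFc
    refine ⟨fun S => (ν S).toReal, mem_chargeSet_of_prob ν hν, ?_⟩
    refine Set.mem_iInter₂.2 fun i hi => Set.mem_iInter.2 fun g => Set.mem_iInter.2 fun T => ?_
    have hkey : (i.2.1 : X → Fin (i.1 + 1)) ⁻¹' T =
        F ⁻¹' ((fun j : Fin (N + 1) => e.symm j ⟨i, hi⟩) ⁻¹' T) := by
      ext x
      simp only [Set.mem_preimage, hF]
      rw [Equiv.symm_apply_apply]
    show (ν _).toReal = (ν _).toReal
    rw [hkey]
    exact congrArg _ (hνp g _)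
  obtain ⟨m, hmQ, hmT⟩ := isCompact_chargeSet.inter_iInter_nonempty Ts hTsclosed hfin
  obtain ⟨μ, hμprob, hμclopen⟩ := aux_charge_extension m (fun C hC => (hmQ.1 C).1)
    hmQ.2.1 hmQ.2.2
  apply hnomeas
  refine ⟨μ, hμprob, fun g => ?_⟩
  have hkey : ∀ C : Set X, IsClopen C → m ((fun x : X => g • x) ⁻¹' C) = m C := by
    intro C hC
    set f : X → Fin 2 := fun x => if x ∈ C then 1 else 0 with hf
    have hfc : Continuous f := by
      refine Continuous.if ?_ continuous_const continuous_const
      intro a ha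
      rw [show {x : X | x ∈ C} = C from rfl, hC.frontier_eq] at ha
      exact absurd ha (Set.notMem_empty a)
    have hCf : C = f ⁻¹' {1} := by
      ext x
      by_cases hx : x ∈ C <;> simp [hf, hx]
    have hmem := Set.mem_iInter.1 (Set.mem_iInter.1
      (Set.mem_iInter.1 hmT ⟨1, ⟨f, hfc⟩⟩) g) ({1} : Set (Fin 2))
    rw [hCf]
    exact hmem
  haveI : IsProbabilityMeasure (Measure.map (fun x : X => g • x) μ) :=
    Measure.isProbabilityMeasure_map (hcont g).measurable.aemeasurable
  refine ext_of_generate_finite {C : Set X | IsClopen C} aux_borel_eq_clopen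
    (fun C hC D hD _ => hC.inter hD) ?_ ?_
  · intro C hC
    rw [Measure.map_apply (hcont g).measurable hC.isOpen.measurableSet,
      hμclopen _ (hC.preimage (hcont g)), hμclopen _ hC, hkey C hC]
  · simp [Measure.map_apply (hcont g).measurable MeasurableSet.univ]

end StepA

/-- a Cantor G-system with no invariant Borel probability measures factors
onto a subshift over a finite alphabet with no invariant Borel probability measures;
moreover minimality is inherited. -/
theorem stmt_11 {G X : Type*} [Group G] [Countable G]
    [MetricSpace X] [CompactSpace X] [TotallyDisconnectedSpace X] [Nonempty X]
    [MeasurableSpace X] [BorelSpace X] [MulAction G X]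
    (hperf : ∀ x : X, ¬ IsOpen ({x} : Set X))
    (hcont : ∀ g : G, Continuous fun x : X => g • x)
    (hnomeas : ¬ ∃ μ : Measure X, IsProbabilityMeasure μ ∧
      ∀ g : G, Measure.map (fun x : X => g • x) μ = μ) :
    ∃ (k : ℕ) (π : X → (G → Fin (k + 1))),
      -- π is a factor map from X onto the subshift Z = π(X)
      Continuous π ∧
      (∀ (g : G) (x : X), π (g • x) = shiftAct g (π x)) ∧
      -- Z has no invariant Borel probability measures
      (¬ ∃ μ : Measure (G → Fin (k + 1)), IsProbabilityMeasure μ ∧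
        μ (Set.range π) = 1 ∧ ∀ g : G, Measure.map (shiftAct g) μ = μ) ∧
      -- if (X,G) is minimal then (Z,G) is minimal
      ((∀ x : X, Dense (MulAction.orbit G x)) →
        ∀ y ∈ Set.range π,
          Set.range π ⊆ closure {w : G → Fin (k + 1) | ∃ g : G, w = shiftAct g y}) := by
  classical
  haveI : Inhabited X := Classical.inhabited_of_nonempty ‹Nonempty X›
  obtain ⟨k, f, hfc, hGood⟩ := aux_exists_good_partition (G := G) hcont hnomeas
  set π : X → (G → Fin (k + 1)) := fun x g => f (g⁻¹ • x) with hπdef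
  have hπc : Continuous π := continuous_pi fun g => hfc.comp (hcont g⁻¹)
  have hπeq : ∀ (g : G) (x : X), π (g • x) = shiftAct g (π x) := by
    intro g x
    funext h
    show f (h⁻¹ • g • x) = f ((g⁻¹ * h)⁻¹ • x)
    rw [mul_inv_rev, inv_inv, mul_smul]
  refine ⟨k, π, hπc, hπeq, ?_, ?_⟩
  · -- no invariant measure on the subshift
    rintro ⟨μ, hμprob, hμrange, hμinv⟩
    apply hGood
    have hshift_meas : ∀ g : G, Measurable (shiftAct g : (G → Fin (k + 1)) → _) := fun g =>
      measurable_pi_lambda _ fun h => measurable_pi_apply _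
    have hTmeas : ∀ (h : G) (T : Set (Fin (k + 1))),
        MeasurableSet {w : G → Fin (k + 1) | w h ∈ T} := fun h T =>
      measurable_pi_apply h MeasurableSet.of_discrete
    have hEqcoord : ∀ (h : G) (T : Set (Fin (k + 1))),
        μ {w | w h ∈ T} = μ {w | w 1 ∈ T} := by
      intro h T
      have hpre : (shiftAct h⁻¹ : (G → Fin (k + 1)) → _) ⁻¹' {w | w 1 ∈ T} = {w | w h ∈ T} := by
        ext w
        simp [shiftAct]
      rw [← hpre, ← Measure.map_apply (hshift_meas h⁻¹) (hTmeas 1 T), hμinv h⁻¹]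
    have hrange_meas : MeasurableSet (Set.range π) := (isCompact_range hπc).isClosed.measurableSet
    have hcompl : μ (Set.range π)ᶜ = 0 := by
      have h := measure_compl hrange_meas (measure_ne_top μ _)
      rw [hμrange, measure_univ] at h
      simpa using h
    set H : G → Set (Set X → ℝ) := fun g =>
      ⋂ T : Set (Fin (k + 1)),
        {m : Set X → ℝ | m ((fun x : X => g • x) ⁻¹' (f ⁻¹' T)) = (μ {w | w 1 ∈ T}).toReal}
      with hH
    have hHclosed : ∀ g, IsClosed (H g) := fun g =>
      isClosed_iInter fun T => isClosed_eq (continuous_apply _) continuous_const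
    have hfin : ∀ u : Finset G, (chargeSet X ∩ ⋂ g ∈ u, H g).Nonempty := by
      intro u
      set E : (↥u → Fin (k + 1)) → Set (G → Fin (k + 1)) := fun v =>
        {w | ∀ i : u, w ((i : G)⁻¹) = v i} with hE
      have hEmeas : ∀ v, MeasurableSet (E v) := by
        intro v
        have : E v = ⋂ i : u, (fun w : G → Fin (k + 1) => w ((i : G)⁻¹)) ⁻¹' {v i} := by
          ext w; simp [hE, Set.mem_iInter]
        rw [this]
        exact MeasurableSet.iInter fun i => measurable_pi_apply _ (measurableSet_singleton _)
      have hEdisj : Pairwise (Function.onFun Disjoint E) := by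
        intro v v' hvv'
        rw [Function.onFun, Set.disjoint_left]
        intro w hw hw'
        exact hvv' (funext fun i => (hw i).symm.trans (hw' i))
      have hEunion : ⋃ v, E v = Set.univ := by
        ext w
        simp only [Set.mem_iUnion, Set.mem_univ, iff_true]
        exact ⟨fun i => w ((i : G)⁻¹), fun i => rfl⟩
      have hEsum : ∀ W : Set (G → Fin (k + 1)), MeasurableSet W →
          ∑ v : ↥u → Fin (k + 1), μ (E v ∩ W) = μ W := by
        intro W hW
        rw [← tsum_fintype (L := .unconditional _), ← measure_iUnion
          (fun v v' h => (hEdisj h).mono Set.inter_subset_left Set.inter_subset_left)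
          (fun v => (hEmeas v).inter hW)]
        rw [← Set.iUnion_inter, hEunion, Set.univ_inter]
      set D : (↥u → Fin (k + 1)) → Set X := fun v => {x | ∀ i : u, f ((i : G) • x) = v i} with hD
      have hDE : ∀ v x, x ∈ D v ↔ π x ∈ E v := by
        intro v x
        constructor
        · intro hx i
          show f (((i : G)⁻¹)⁻¹ • x) = v i
          rw [inv_inv]
          exact hx i
        · intro hx i
          have h := hx i
          simp only [hπdef, inv_inv] at h
          exact h
      set xv : (↥u → Fin (k + 1)) → X := fun v =>
        if hv : (D v).Nonempty then hv.choose else default with hxv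
      have hxvmem : ∀ v, μ (E v) ≠ 0 → xv v ∈ D v := by
        intro v hv
        have hne : (E v ∩ Set.range π).Nonempty := by
          by_contra hemp
          rw [Set.not_nonempty_iff_eq_empty] at hemp
          have hsub : E v ⊆ (Set.range π)ᶜ := fun w hw hwr =>
            Set.eq_empty_iff_forall_notMem.1 hemp w ⟨hw, hwr⟩
          exact hv (le_antisymm ((measure_mono hsub).trans hcompl.le) zero_le)
        obtain ⟨w, hwE, x, rfl⟩ := hne
        have hDv : (D v).Nonempty := ⟨x, (hDE v x).2 hwE⟩
        rw [hxv]
        simp only [dif_pos hDv]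
        exact hDv.choose_spec
      set ν : Measure X := ∑ v : ↥u → Fin (k + 1), μ (E v) • Measure.dirac (xv v) with hν
      have hν_apply : ∀ S : Set X, MeasurableSet S →
          ν S = ∑ v : ↥u → Fin (k + 1), μ (E v) * (if xv v ∈ S then 1 else 0) := by
        intro S hS
        rw [hν, Measure.finset_sum_apply]
        refine Finset.sum_congr rfl fun v _ => ?_
        rw [Measure.smul_apply, Measure.dirac_apply' _ hS, smul_eq_mul]
        congr 1
      have hνprob : IsProbabilityMeasure ν := by
        constructor
        rw [hν_apply _ MeasurableSet.univ]
        simp only [Set.mem_univ, if_true, mul_one]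
        have h := hEsum Set.univ MeasurableSet.univ
        simp only [Set.inter_univ] at h
        rw [h, measure_univ]
      refine ⟨fun S => (ν S).toReal, mem_chargeSet_of_prob ν hνprob, ?_⟩
      refine Set.mem_iInter₂.2 fun g hg => Set.mem_iInter.2 fun T => ?_
      have hSmeas : MeasurableSet ((fun x : X => g • x) ⁻¹' (f ⁻¹' T)) :=
        (hfc.comp (hcont g)).measurable MeasurableSet.of_discrete
      show (ν ((fun x : X => g • x) ⁻¹' (f ⁻¹' T))).toReal = (μ {w | w 1 ∈ T}).toReal
      rw [hν_apply _ hSmeas]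
      have hterm : ∀ v : ↥u → Fin (k + 1),
          μ (E v) * (if xv v ∈ (fun x : X => g • x) ⁻¹' (f ⁻¹' T) then 1 else 0) =
          μ (E v ∩ {w | w g⁻¹ ∈ T}) := by
        intro v
        by_cases hv : μ (E v) = 0
        · rw [hv, zero_mul]
          exact (le_antisymm ((measure_mono Set.inter_subset_left).trans hv.le) zero_le).symm
        · have hxvD := hxvmem v hv
          by_cases hvg : v ⟨g, hg⟩ ∈ T
          · have hmem : xv v ∈ (fun x : X => g • x) ⁻¹' (f ⁻¹' T) := by
              show f (g • xv v) ∈ T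
              rw [hxvD ⟨g, hg⟩]
              exact hvg
            rw [if_pos hmem, mul_one]
            congr 1
            refine (Set.inter_eq_self_of_subset_left ?_).symm
            intro w hw
            show w g⁻¹ ∈ T
            rw [hw ⟨g, hg⟩]
            exact hvg
          · have hmem : xv v ∉ (fun x : X => g • x) ⁻¹' (f ⁻¹' T) := by
              show ¬ f (g • xv v) ∈ T
              rw [hxvD ⟨g, hg⟩]
              exact hvg
            rw [if_neg hmem, mul_zero]
            have hempty : E v ∩ {w : G → Fin (k + 1) | w g⁻¹ ∈ T} = ∅ := by
              ext w
              simp only [Set.mem_inter_iff, Set.mem_setOf_eq, Set.mem_empty_iff_false, iff_false,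
                not_and]
              intro hw hwT
              exact hvg (by rw [← hw ⟨g, hg⟩]; exact hwT)
            rw [hempty, measure_empty]
      rw [Finset.sum_congr rfl fun v _ => hterm v, hEsum _ (hTmeas g⁻¹ T), hEqcoord g⁻¹ T]
    obtain ⟨m, hm⟩ := isCompact_chargeSet.inter_iInter_nonempty H hHclosed hfin
    obtain ⟨ν, hνprob, hνclopen⟩ := aux_charge_extension m (fun C hC => (hm.1.1 C).1)
      hm.1.2.1 hm.1.2.2
    refine ⟨ν, hνprob, ?_⟩
    intro g T
    have hclopenT : ∀ h : G, IsClopen ((fun x : X => h • x) ⁻¹' (f ⁻¹' T)) := fun h =>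
      ((isClopen_discrete T).preimage hfc).preimage (hcont h)
    have h1 : ν ((fun x : X => g • x) ⁻¹' (f ⁻¹' T)) =
        ENNReal.ofReal ((μ {w | w 1 ∈ T}).toReal) := by
      rw [hνclopen _ (hclopenT g)]
      congr 1
      exact Set.mem_iInter.1 (Set.mem_iInter.1 hm.2 g) T
    have hone : (fun x : X => (1 : G) • x) ⁻¹' (f ⁻¹' T) = f ⁻¹' T := by
      ext x; simp [one_smul]
    have h2 : ν (f ⁻¹' T) = ENNReal.ofReal ((μ {w | w 1 ∈ T}).toReal) := by
      rw [← hone, hνclopen _ (hclopenT 1)]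
      congr 1
      exact Set.mem_iInter.1 (Set.mem_iInter.1 hm.2 1) T
    rw [h1, h2]
  · -- minimality
    rintro hmin y ⟨x₀, rfl⟩ w ⟨x, rfl⟩
    have hx : x ∈ closure (MulAction.orbit G x₀) := by
      rw [(hmin x₀).closure_eq]
      trivial
    have h1 : π x ∈ closure (π '' MulAction.orbit G x₀) :=
      image_closure_subset_closure_image hπc ⟨x, hx, rfl⟩
    refine closure_mono ?_ h1
    rintro _ ⟨_, ⟨g, rfl⟩, rfl⟩
    exact ⟨g, hπeq g x₀⟩
end

section
/- Let (Γₙ)ₙ be a strictly decreasing sequence of finite index subgroups of a countable group G. Then there exists a Toeplitz subshift X ⊆ {0,1}^G such that (X,G) is an almost one-to-one extension of the G-odometer associated to (Γₙ)ₙ. -/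
noncomputable instance odQuotUniform {G : Type*} [Group G] (Γ : Subgroup G) :
    UniformSpace (G ⧸ Γ) := ⊥

/-- A Toeplitz element of `{0,1}^G`: every coordinate is periodic for some finite index
subgroup. -/
def IsToeplitz {G A : Type*} [Group G] (x : G → A) : Prop :=
  ∀ g : G, ∃ Γ : Subgroup G, Γ.FiniteIndex ∧ ∀ γ ∈ Γ, x (γ⁻¹ * g) = x g

/-- The orbit closure of `x` under the shift action. -/
def orbitClosure {G A : Type*} [Group G] [TopologicalSpace A] (x : G → A) :
    Set (G → A) :=
  closure {y : G → A | ∃ g : G, y = shiftAct g x}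


/-! Auxiliary: a proper finite-index subgroup misses some full conjugacy class. -/

theorem exists_conj_escape_finite {Q : Type*} [Group Q] [Finite Q] (B : Subgroup Q)
    (hB : B ≠ ⊤) : ∃ q : Q, ∀ γ : Q, γ * q * γ⁻¹ ∉ B := by
  classical
  by_contra hcon
  push_neg at hcon
  -- hcon : ∀ q, ∃ γ, γ * q * γ⁻¹ ∈ B
  have hF : Function.Surjective (fun z : ((Q ⧸ B) × {b : ↥B // (b : Q) ≠ 1}) ⊕ Unit =>
      match z with
      | Sum.inl (c, b) => c.out * (b.1 : Q) * c.out⁻¹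
      | Sum.inr _ => (1 : Q)) := by
    intro q
    by_cases hq : q = 1
    · exact ⟨Sum.inr (), hq.symm⟩
    · obtain ⟨γ, hγ⟩ := hcon q
      set c : Q ⧸ B := ↑(γ⁻¹) with hc
      have hout : γ * c.out ∈ B := by
        have h1 : ((γ⁻¹ : Q) : Q ⧸ B) = ↑c.out := (QuotientGroup.out_eq' c).symm
        have h2 := QuotientGroup.eq.mp h1
        simpa using h2
      have hb' : c.out⁻¹ * q * c.out ∈ B := by
        have h3 : c.out⁻¹ * q * c.out
            = (γ * c.out)⁻¹ * (γ * q * γ⁻¹) * (γ * c.out) := by group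
        rw [h3]
        exact mul_mem (mul_mem (inv_mem hout) hγ) hout
      refine ⟨Sum.inl (c, ⟨⟨_, hb'⟩, ?_⟩), ?_⟩
      · intro h
        apply hq
        have : q = c.out * (c.out⁻¹ * q * c.out) * c.out⁻¹ := by group
        rw [this, show c.out⁻¹ * q * c.out = (1:Q) from h]
        group
      · show c.out * (c.out⁻¹ * q * c.out) * c.out⁻¹ = q
        group
  have hcard := Nat.card_le_card_of_surjective _ hF
  rw [Nat.card_sum, Nat.card_prod, show Nat.card Unit = 1 from Nat.card_unique] at hcard
  have hsub : Nat.card ↥B = Nat.card {b : ↥B // (b : Q) ≠ 1} + 1 := by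
    have e1 : ↥B ≃ ({b : ↥B // (b : Q) = 1} ⊕ {b : ↥B // ¬ (b : Q) = 1}) :=
      (Equiv.sumCompl (fun b : ↥B => (b : Q) = 1)).symm
    have h1 : Nat.card {b : ↥B // (b : Q) = 1} = 1 := by
      haveI : Unique {b : ↥B // (b : Q) = 1} := by
        refine ⟨⟨⟨1, rfl⟩⟩, ?_⟩
        rintro ⟨b, hb⟩
        ext
        exact hb
      exact Nat.card_unique
    rw [Nat.card_congr e1, Nat.card_sum, h1, Nat.add_comm]
  have hlag : Nat.card ↥B * B.index = Nat.card Q := Subgroup.card_mul_index B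
  have hidx : 1 < B.index := Subgroup.one_lt_index_of_ne_top hB
  have hpos : 0 < Nat.card ↥B := Nat.card_pos
  have hquot : Nat.card (Q ⧸ B) = B.index := (Subgroup.index_eq_card B).symm
  rw [hquot] at hcard
  -- hcard : Nat.card Q ≤ B.index * Nat.card {b // ≠ 1} + 1
  obtain ⟨b', hb'⟩ : ∃ b', Nat.card ↥B = b' + 1 :=
    ⟨Nat.card ↥B - 1, (Nat.succ_pred_eq_of_pos hpos).symm⟩
  have hsub' : Nat.card {b : ↥B // (b : Q) ≠ 1} = b' := by omega
  rw [hsub'] at hcard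
  rw [hb'] at hlag
  have hring : (b' + 1) * B.index = b' * B.index + B.index := by ring
  have hcomm : B.index * b' = b' * B.index := by ring
  omega

/-- A proper subgroup of finite index has an element of the over-group none of whose
conjugates lies in it. -/
theorem exists_conj_escape {G : Type*} [Group G] (H K : Subgroup G)
    (hfi : H.FiniteIndex) (hlt : H < K) :
    ∃ q ∈ K, ∀ γ ∈ K, γ * q * γ⁻¹ ∉ H := by
  classical
  haveI := hfi
  set B : Subgroup ↥K := H.subgroupOf K with hBdef
  haveI : B.FiniteIndex := Subgroup.instFiniteIndex_subgroupOf H K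
  haveI : B.normalCore.FiniteIndex := Subgroup.finiteIndex_normalCore B
  haveI : Finite (↥K ⧸ B.normalCore) := Subgroup.finite_quotient_of_finiteIndex
  set φ := QuotientGroup.mk' B.normalCore with hφ
  set B' : Subgroup (↥K ⧸ B.normalCore) := B.map φ with hB'
  have hmemB' : ∀ z : ↥K, φ z ∈ B' → z ∈ B := by
    intro z hz
    obtain ⟨b, hbB, hbz⟩ := Subgroup.mem_map.mp hz
    have : b⁻¹ * z ∈ B.normalCore := by
      rw [← QuotientGroup.ker_mk' (B.normalCore), MonoidHom.mem_ker]
      simp only [map_mul, map_inv]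
      rw [hbz]
      exact inv_mul_cancel _
    have hcore := B.normalCore_le this
    have : z = b * (b⁻¹ * z) := by group
    rw [this]
    exact mul_mem hbB hcore
  have hB'ne : B' ≠ ⊤ := by
    obtain ⟨zel, hzK, hzH⟩ := SetLike.exists_of_lt hlt
    intro htop
    apply hzH
    have : φ ⟨zel, hzK⟩ ∈ B' := by rw [htop]; trivial
    exact (hmemB' _ this)
  obtain ⟨qbar, hqbar⟩ := exists_conj_escape_finite B' hB'ne
  obtain ⟨q', hq'⟩ := QuotientGroup.mk'_surjective B.normalCore qbar
  refine ⟨(q' : G), q'.2, ?_⟩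
  intro γ hγK hmem
  have hzB : (⟨γ, hγK⟩ * q' * ⟨γ, hγK⟩⁻¹ : ↥K) ∈ B := by
    rw [hBdef, Subgroup.mem_subgroupOf]
    exact hmem
  apply hqbar (φ ⟨γ, hγK⟩)
  have : φ (⟨γ, hγK⟩ * q' * ⟨γ, hγK⟩⁻¹) ∈ B' := Subgroup.mem_map.mpr ⟨_, hzB, rfl⟩
  have hq'' : φ q' = qbar := hq'
  simpa [map_mul, map_inv, hq''] using this

/-! ## The construction bundle -/

/-- All data needed for the construction of the Toeplitz element. -/
structure OdoSetup (G : Type*) [Group G] where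
  Γ : ℕ → Subgroup G
  hfi : ∀ n, (Γ n).FiniteIndex
  hdec : ∀ n, Γ (n + 1) < Γ n
  hs : ℕ → G
  hsurj : Function.Surjective hs

namespace OdoSetup

variable {G : Type*} [Group G] (S : OdoSetup G)

theorem mono : ∀ {i j : ℕ}, i ≤ j → S.Γ j ≤ S.Γ i := by
  intro i j hij
  exact antitone_nat_of_succ_le (fun n => (S.hdec n).le) hij

/-- An element of `Γ j` not in `Γ (j+1)`. -/
noncomputable def zel (j : ℕ) : G := (SetLike.exists_of_lt (S.hdec j)).choose

theorem zel_mem (j : ℕ) : S.zel j ∈ S.Γ j :=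
  (SetLike.exists_of_lt (S.hdec j)).choose_spec.1

theorem zel_not_mem (j : ℕ) : S.zel j ∉ S.Γ (j + 1) :=
  (SetLike.exists_of_lt (S.hdec j)).choose_spec.2

/-- An element of `Γ j` none of whose `Γ j`-conjugates lies in `Γ (j+1)`. -/
noncomputable def qel (j : ℕ) : G :=
  (exists_conj_escape (S.Γ (j + 1)) (S.Γ j) (S.hfi (j + 1)) (S.hdec j)).choose

theorem qel_mem (j : ℕ) : S.qel j ∈ S.Γ j :=
  (exists_conj_escape (S.Γ (j + 1)) (S.Γ j) (S.hfi (j + 1)) (S.hdec j)).choose_spec.1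

theorem qel_conj (j : ℕ) : ∀ γ ∈ S.Γ j, γ * S.qel j * γ⁻¹ ∉ S.Γ (j + 1) :=
  (exists_conj_escape (S.Γ (j + 1)) (S.Γ j) (S.hfi (j + 1)) (S.hdec j)).choose_spec.2

open Classical in
/-- The base points of the nested chain of cosets. -/
noncomputable def a : ℕ → G :=
  Nat.rec 1 (fun i ai => if S.hs i * ai⁻¹ ∈ S.Γ (i + 1) then S.zel i * ai else ai)

theorem a_zero : S.a 0 = 1 := rfl

open Classical in
theorem a_succ (i : ℕ) :
    S.a (i + 1) = if S.hs i * (S.a i)⁻¹ ∈ S.Γ (i + 1) then S.zel i * S.a i else S.a i := rfl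

/-- The nested chain of right cosets `C i = Γ i * (a i)`. -/
def C (i : ℕ) : Set G := {g | g * (S.a i)⁻¹ ∈ S.Γ i}

theorem a_mem_C (i : ℕ) : S.a i ∈ S.C i := by
  show S.a i * (S.a i)⁻¹ ∈ S.Γ i
  simpa using one_mem (S.Γ i)

theorem a_succ_diff (i : ℕ) : S.a (i + 1) * (S.a i)⁻¹ ∈ S.Γ i := by
  rw [a_succ]
  split
  · simpa using S.zel_mem i
  · simpa using one_mem (S.Γ i)

theorem C_succ_subset (i : ℕ) : S.C (i + 1) ⊆ S.C i := by
  intro g hg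
  have h1 : g * (S.a (i + 1))⁻¹ ∈ S.Γ i := S.mono (Nat.le_succ i) hg
  have h2 : g * (S.a i)⁻¹ = (g * (S.a (i + 1))⁻¹) * (S.a (i + 1) * (S.a i)⁻¹) := by group
  rw [C, Set.mem_setOf_eq, h2]
  exact mul_mem h1 (S.a_succ_diff i)

theorem C_anti {i j : ℕ} (hij : i ≤ j) : S.C j ⊆ S.C i := by
  induction j with
  | zero =>
    have : i = 0 := by omega
    subst this; exact le_refl _
  | succ j ih =>
    rcases Nat.lt_or_ge i (j+1) with h | h
    · exact fun g hg => ih (by omega) (S.C_succ_subset j hg)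
    · have : i = j + 1 := by omega
      subst this; exact le_refl _

theorem hs_not_mem (i : ℕ) : S.hs i ∉ S.C (i + 1) := by
  rw [C, Set.mem_setOf_eq, a_succ]
  split
  · rename_i hyp
    intro hmem
    -- hmem : hs i * (zel i * a i)⁻¹ ∈ Γ (i+1), hyp : hs i * (a i)⁻¹ ∈ Γ (i+1)
    apply S.zel_not_mem i
    have h1 : S.zel i = (S.hs i * (S.zel i * S.a i)⁻¹)⁻¹ * (S.hs i * (S.a i)⁻¹) := by group
    rw [h1]
    exact mul_mem (inv_mem hmem) hyp
  · rename_i hyp; exact hyp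

theorem exists_not_mem_C (h : G) : ∃ i, h ∉ S.C i := by
  obtain ⟨j, hj⟩ := S.hsurj h
  exact ⟨j + 1, hj ▸ S.hs_not_mem j⟩

open Classical in
/-- The level of a point: the first `i` such that `h ∉ C i`. -/
noncomputable def lvl (h : G) : ℕ := Nat.find (S.exists_not_mem_C h)

/-- The Toeplitz element. -/
noncomputable def xel (h : G) : Bool := decide (Odd (S.lvl h))

open Classical in
theorem lvl_spec (h : G) : h ∉ S.C (S.lvl h) := Nat.find_spec (S.exists_not_mem_C h)

open Classical in
theorem lvl_mem {h : G} {i : ℕ} (hi : i < S.lvl h) : h ∈ S.C i :=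
  not_not.mp (Nat.find_min (S.exists_not_mem_C h) hi)

open Classical in
theorem lvl_eq {h : G} {j : ℕ} (h1 : ∀ i < j, h ∈ S.C i) (h2 : h ∉ S.C j) : S.lvl h = j := by
  rw [lvl, Nat.find_eq_iff]
  exact ⟨h2, fun i hi => not_not_intro (h1 i hi)⟩

theorem mem_C_mul {i : ℕ} {γ h : G} (hγ : γ ∈ S.Γ i) : γ * h ∈ S.C i ↔ h ∈ S.C i := by
  constructor
  · intro hm
    have hm' : γ * h * (S.a i)⁻¹ ∈ S.Γ i := hm
    have : h * (S.a i)⁻¹ = γ⁻¹ * (γ * h * (S.a i)⁻¹) := by group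
    rw [C, Set.mem_setOf_eq, this]
    exact mul_mem (inv_mem hγ) hm'
  · intro hm
    have hm' : h * (S.a i)⁻¹ ∈ S.Γ i := hm
    have : γ * h * (S.a i)⁻¹ = γ * (h * (S.a i)⁻¹) := by group
    rw [C, Set.mem_setOf_eq, this]
    exact mul_mem hγ hm'

/-- Periodicity: each coordinate of `xel` is `Γ (lvl h)`-periodic. -/
theorem xel_periodic {h γ : G} (hγ : γ ∈ S.Γ (S.lvl h)) : S.xel (γ * h) = S.xel h := by
  have hlvl : S.lvl (γ * h) = S.lvl h := by
    apply S.lvl_eq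
    · intro i hi
      exact (S.mem_C_mul (S.mono hi.le hγ)).mpr (S.lvl_mem hi)
    · intro hmem
      exact S.lvl_spec h ((S.mem_C_mul hγ).mp hmem)
  rw [xel, xel, hlvl]

end OdoSetup

namespace OdoSetup

variable {G : Type*} [Group G] (S : OdoSetup G)

/-- The window at level `j`. -/
noncomputable def W (j : ℕ) : Set G :=
  Set.range (fun c : G ⧸ S.Γ j => c.out * S.a j) ∪
    Set.range (fun c : G ⧸ S.Γ j => c.out * (S.qel j * S.a j))

theorem W_finite (j : ℕ) : (S.W j).Finite := by
  haveI := S.hfi j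
  haveI : Finite (G ⧸ S.Γ j) := Subgroup.finite_quotient_of_finiteIndex
  exact (Set.finite_range _).union (Set.finite_range _)

/-- The window for reading the coset mod `Γ n`. -/
noncomputable def E (n : ℕ) : Set G := ⋃ j ∈ Set.Iic n, S.W j

theorem E_finite (n : ℕ) : (S.E n).Finite :=
  Set.Finite.biUnion (Set.finite_Iic n) (fun j _ => S.W_finite j)

/-- The central separation lemma: the window pattern determines the coset. -/
theorem sep {n : ℕ} {k k' : G} (hkk : ∀ e ∈ S.E n, S.xel (k * e) = S.xel (k' * e)) :
    k' * k⁻¹ ∈ S.Γ n := by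
  classical
  by_contra hne
  have hex : ∃ j, k' * k⁻¹ ∉ S.Γ j := ⟨n, hne⟩
  set j := Nat.find hex with hjdef
  have hjle : j ≤ n := Nat.find_min' hex hne
  have hjP : k' * k⁻¹ ∉ S.Γ j := Nat.find_spec hex
  have hjlt : ∀ i < j, k' * k⁻¹ ∈ S.Γ i := fun i hi => not_not.mp (Nat.find_min hex hi)
  set c : G ⧸ S.Γ j := ↑(k⁻¹) with hc
  set t : G := c.out with ht
  have hγ : k * t ∈ S.Γ j := by
    have h1 : ((k⁻¹ : G) : G ⧸ S.Γ j) = ↑t := (QuotientGroup.out_eq' c).symm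
    simpa using QuotientGroup.eq.mp h1
  set γ : G := k * t with hγdef
  set w : G := k' * t with hwdef
  have hwγ : w = (k' * k⁻¹) * γ := by rw [hγdef, hwdef]; group
  have hw : w ∉ S.Γ j := by
    intro hmem
    apply hjP
    have h2 : k' * k⁻¹ = w * γ⁻¹ := by rw [hwγ]; group
    rw [h2]
    exact mul_mem hmem (inv_mem hγ)
  have hwlt : ∀ i < j, w ∈ S.Γ i := by
    intro i hi
    rw [hwγ]
    exact mul_mem (hjlt i hi) (S.mono hi.le hγ)
  -- choose the window element b ∈ {a j, qel j * a j}
  have hbex : ∃ b : G, (t * b ∈ S.W j ∧ b * (S.a j)⁻¹ ∈ S.Γ j) ∧ γ * b ∉ S.C (j + 1) := by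
    by_cases hcase : γ * S.a j ∈ S.C (j + 1)
    · refine ⟨S.qel j * S.a j, ⟨Or.inr ⟨c, rfl⟩, by simpa [mul_assoc] using S.qel_mem j⟩, ?_⟩
      intro hmem
      apply S.qel_conj j γ hγ
      have hX : γ * (S.qel j * S.a j) * (S.a (j + 1))⁻¹ ∈ S.Γ (j + 1) := hmem
      have hY : γ * S.a j * (S.a (j + 1))⁻¹ ∈ S.Γ (j + 1) := hcase
      have h3 : γ * S.qel j * γ⁻¹
          = (γ * (S.qel j * S.a j) * (S.a (j + 1))⁻¹) * (γ * S.a j * (S.a (j + 1))⁻¹)⁻¹ := by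
        group
      rw [h3]
      exact mul_mem hX (inv_mem hY)
    · exact ⟨S.a j, ⟨Or.inl ⟨c, rfl⟩, by simpa using one_mem (S.Γ j)⟩, hcase⟩
  obtain ⟨b, ⟨hbW, hbΓ⟩, hγb⟩ := hbex
  have hbC : b ∈ S.C j := hbΓ
  have heE : t * b ∈ S.E n := Set.mem_biUnion (Set.mem_Iic.mpr hjle) hbW
  -- value on the k side
  have hke : k * (t * b) = γ * b := by rw [hγdef]; group
  have hlvl1 : S.lvl (γ * b) = j + 1 := by
    apply S.lvl_eq
    · intro i hi
      have hi' : i ≤ j := by omega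
      exact (S.mem_C_mul (S.mono hi' hγ)).mpr (S.C_anti hi' hbC)
    · exact hγb
  -- value on the k' side
  have hk'e : k' * (t * b) = w * b := by rw [hwdef]; group
  have hlvl2 : S.lvl (w * b) = j := by
    apply S.lvl_eq
    · intro i hi
      exact (S.mem_C_mul (hwlt i hi)).mpr (S.C_anti hi.le hbC)
    · intro hmem
      apply hw
      have h4 : w * b * (S.a j)⁻¹ ∈ S.Γ j := hmem
      have h5 : w = (w * b * (S.a j)⁻¹) * (b * (S.a j)⁻¹)⁻¹ := by group
      rw [h5]
      exact mul_mem h4 (inv_mem hbΓ)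
  have := hkk (t * b) heE
  rw [hke, hk'e, xel, xel, hlvl1, hlvl2, decide_eq_decide] at this
  rw [Nat.odd_add_one] at this
  tauto

open Classical in
/-- The coset-reading function: continuous because it only depends on the window. -/
noncomputable def rd (n : ℕ) (p : ↥(S.E n) → Bool) : G ⧸ S.Γ n :=
  if h : ∃ g : G, ∀ e : ↥(S.E n), p e = S.xel (g⁻¹ * (e : G)) then ↑h.choose else ↑(1 : G)

/-- The factor map onto the odometer. -/
noncomputable def pii (y : G → Bool) : Π n, G ⧸ S.Γ n :=
  fun n => S.rd n (fun e => y e)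

open Classical in
theorem pii_eq {n : ℕ} {y : G → Bool} {g₀ : G}
    (hm : ∀ e ∈ S.E n, y e = S.xel (g₀⁻¹ * e)) : S.pii y n = ↑g₀ := by
  have hexi : ∃ g : G, ∀ e : ↥(S.E n), y e = S.xel (g⁻¹ * (e : G)) :=
    ⟨g₀, fun e => hm e e.2⟩
  rw [pii, rd, dif_pos hexi]
  have hg' := hexi.choose_spec
  have hpat : ∀ e ∈ S.E n, S.xel (hexi.choose⁻¹ * e) = S.xel (g₀⁻¹ * e) :=
    fun e he => (hg' ⟨e, he⟩).symm.trans (hm e he)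
  have hsep := S.sep hpat
  -- hsep : g₀⁻¹ * (hexi.choose⁻¹)⁻¹ ∈ Γ n
  rw [QuotientGroup.eq]
  have h6 : hexi.choose⁻¹ * g₀ = (g₀⁻¹ * (hexi.choose⁻¹)⁻¹)⁻¹ := by group
  rw [h6]
  exact inv_mem hsep

theorem pii_shift (g : G) : ∀ n, S.pii (shiftAct g S.xel) n = ↑g := by
  intro n
  apply S.pii_eq
  intro e _
  rfl

end OdoSetup

instance odQuotDiscrete {G : Type*} [Group G] (Γ : Subgroup G) :
    DiscreteTopology (G ⧸ Γ) := ⟨rfl⟩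

theorem shiftAct_comp {G A : Type*} [Group G] (g g' : G) (y : G → A) :
    shiftAct g (shiftAct g' y) = shiftAct (g * g') y := by
  funext h
  simp [shiftAct, mul_assoc]

theorem shiftAct_continuous {G : Type*} [Group G] (g : G) :
    Continuous (shiftAct g : (G → Bool) → (G → Bool)) :=
  continuous_pi (fun h => continuous_apply (g⁻¹ * h))

namespace OdoSetup

variable {G : Type*} [Group G] (S : OdoSetup G)

theorem pii_continuous : Continuous S.pii := by
  apply continuous_pi
  intro n
  have h1 : Continuous (fun y : G → Bool => (fun e : ↥(S.E n) => y e)) :=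
    continuous_pi (fun e => continuous_apply (e : G))
  haveI : Finite ↥(S.E n) := (S.E_finite n).to_subtype
  haveI : DiscreteTopology (↥(S.E n) → Bool) := Pi.discreteTopology
  exact (continuous_of_discreteTopology (f := S.rd n)).comp h1

theorem matching {y : G → Bool} (hy : y ∈ orbitClosure S.xel) {T : Set G} (hT : T.Finite) :
    ∃ g₀ : G, ∀ e ∈ T, y e = S.xel (g₀⁻¹ * e) := by
  have hU : IsOpen {y' : G → Bool | ∀ e ∈ T, y' e = y e} := by
    have hrw : {y' : G → Bool | ∀ e ∈ T, y' e = y e} = ⋂ e ∈ T, {y' | y' e = y e} := by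
      ext y'; simp
    rw [hrw]
    refine hT.isOpen_biInter (fun e _ => ?_)
    have : {y' : G → Bool | y' e = y e} = (fun y' : G → Bool => y' e) ⁻¹' {y e} := by
      ext y'; simp
    rw [this]
    exact IsOpen.preimage (continuous_apply e) (isOpen_discrete _)
  obtain ⟨y', hy'U, hy'orb⟩ := mem_closure_iff.mp hy _ hU (fun e _ => rfl)
  obtain ⟨g₀, rfl⟩ := hy'orb
  exact ⟨g₀, fun e he => (hy'U e he).symm⟩

theorem orbitClosure_shift {y : G → Bool} (g : G) (hy : y ∈ orbitClosure S.xel) :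
    shiftAct g y ∈ orbitClosure S.xel := by
  have h1 : shiftAct g '' {y : G → Bool | ∃ g', y = shiftAct g' S.xel}
      ⊆ {y : G → Bool | ∃ g', y = shiftAct g' S.xel} := by
    rintro _ ⟨y', ⟨g', rfl⟩, rfl⟩
    exact ⟨g * g', (shiftAct_comp g g' S.xel)⟩
  have h2 : shiftAct g y ∈ shiftAct g '' orbitClosure S.xel := ⟨y, hy, rfl⟩
  have h3 := image_closure_subset_closure_image (s := {y : G → Bool | ∃ g', y = shiftAct g' S.xel})
    (shiftAct_continuous g)
  exact closure_mono h1 (h3 h2)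

/-- Uniqueness of the preimage of coset orbit points. -/
theorem unique_fiber (g : G) {y : G → Bool} (hy : y ∈ orbitClosure S.xel)
    (hpi : ∀ n, S.pii y n = ((g : G ⧸ S.Γ n))) : y = shiftAct g S.xel := by
  funext h
  set N := S.lvl (g⁻¹ * h) with hN
  obtain ⟨g₀, hg₀⟩ := S.matching hy (Set.Finite.union (Set.finite_singleton h) (S.E_finite N))
  have h1 : y h = S.xel (g₀⁻¹ * h) := hg₀ h (Or.inl rfl)
  have h2 : S.pii y N = ↑g₀ := S.pii_eq (fun e he => hg₀ e (Or.inr he))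
  have h3 : ((g₀ : G ⧸ S.Γ N)) = ↑g := h2.symm.trans (hpi N)
  have h4 : g₀⁻¹ * g ∈ S.Γ N := QuotientGroup.eq.mp h3
  have h5 : g₀⁻¹ * h = (g₀⁻¹ * g) * (g⁻¹ * h) := by group
  rw [h1, h5, S.xel_periodic h4]
  rfl

end OdoSetup

/-- for every strictly decreasing sequence of finite index subgroups there
is a Toeplitz subshift X ⊆ {0,1}^G which is an almost one-to-one extension of the
associated G-odometer. -/
theorem stmt_15 {G : Type*} [Group G] [Countable G]
    (Γ : ℕ → Subgroup G) (hfi : ∀ n, (Γ n).FiniteIndex) (hdec : ∀ n, Γ (n + 1) < Γ n) :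
    ∃ x : G → Bool, IsToeplitz x ∧
      ∃ π : (G → Bool) → (Π n, G ⧸ Γ n),
        ContinuousOn π (orbitClosure x) ∧
        Set.MapsTo π (orbitClosure x) (odometerSet Γ) ∧
        (∀ g : G, ∀ y ∈ orbitClosure x, π (shiftAct g y) = g • π y) ∧
        Set.SurjOn π (orbitClosure x) (odometerSet Γ) ∧
        -- almost one-to-one: points with a unique preimage are dense in the odometer
        (∀ z ∈ odometerSet Γ,
          z ∈ closure {z' | z' ∈ odometerSet Γ ∧
            ∃! y : G → Bool, y ∈ orbitClosure x ∧ π y = z'}) := by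

  classical
  obtain ⟨hs, hsurj⟩ := exists_surjective_nat G
  let S : OdoSetup G := ⟨Γ, hfi, hdec, hs, hsurj⟩
  -- constant sequences belong to the odometer
  have hconst_mem : ∀ g : G, (fun n => (↑g : G ⧸ Γ n)) ∈ odometerSet Γ := by
    intro g n g₂ h
    have h1 : g⁻¹ * g₂ ∈ Γ (n + 1) := QuotientGroup.eq.mp h
    exact QuotientGroup.eq.mpr ((hdec n).le h1)
  -- constant sequences are dense in the odometer
  have hdense : ∀ z ∈ odometerSet Γ,
      z ∈ closure {w : Π n, G ⧸ Γ n | ∃ g : G, w = fun n => ↑g} := by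
    intro z hz
    rw [mem_closure_iff]
    intro U hU hzU
    obtain ⟨I, u, hu, hsub⟩ := isOpen_pi_iff.mp hU z hzU
    set N := I.sup id with hN
    obtain ⟨g, hg⟩ := QuotientGroup.mk_surjective (z N)
    have hdown : ∀ d n, n + d = N → z n = ↑g := by
      intro d
      induction d with
      | zero =>
        intro n hn
        have : n = N := by omega
        subst this
        exact hg.symm
      | succ d ih =>
        intro n hn
        have hz1 : z (n + 1) = ↑g := ih (n + 1) (by omega)
        exact hz n g hz1
    refine ⟨(fun n => (↑g : G ⧸ Γ n)), hsub ?_, ⟨g, rfl⟩⟩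
    intro n hnI
    have hnN : n ≤ N := Finset.le_sup (f := id) hnI
    have hzn : z n = ↑g := hdown (N - n) n (by omega)
    show (↑g : G ⧸ Γ n) ∈ u n
    rw [← hzn]
    exact (hu n hnI).2
  -- the odometer is closed
  have hclosed : IsClosed (odometerSet Γ) := by
    have hrw : odometerSet Γ
        = ⋂ (n : ℕ), ⋂ (g : G), {z : Π m, G ⧸ Γ m | z (n + 1) = ↑g → z n = ↑g} := by
      ext z; simp [odometerSet]
    rw [hrw]
    refine isClosed_iInter fun n => isClosed_iInter fun g => ?_
    have hrw2 : {z : Π m, G ⧸ Γ m | z (n + 1) = ↑g → z n = ↑g}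
        = ((fun z : Π m, G ⧸ Γ m => z (n + 1)) ⁻¹' {↑g})ᶜ
          ∪ ((fun z : Π m, G ⧸ Γ m => z n) ⁻¹' {↑g}) := by
      ext z
      by_cases h : z (n + 1) = (↑g : G ⧸ Γ (n + 1)) <;> simp [h]
    rw [hrw2]
    exact IsClosed.union
      ((IsOpen.preimage (continuous_apply (n + 1)) (isOpen_discrete _)).isClosed_compl)
      (IsClosed.preimage (continuous_apply n) (isClosed_discrete _))
  refine ⟨S.xel, ?_, S.pii, S.pii_continuous.continuousOn, ?_, ?_, ?_, ?_⟩
  · -- Toeplitz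
    intro g
    exact ⟨Γ (S.lvl g), hfi _, fun γ hγ => S.xel_periodic (inv_mem hγ)⟩
  · -- MapsTo
    have horb : {y : G → Bool | ∃ g, y = shiftAct g S.xel} ⊆ S.pii ⁻¹' odometerSet Γ := by
      rintro _ ⟨g, rfl⟩
      intro n g₂ h
      rw [S.pii_shift g] at h
      rw [S.pii_shift g]
      have h1 : g⁻¹ * g₂ ∈ Γ (n + 1) := QuotientGroup.eq.mp h
      exact QuotientGroup.eq.mpr ((hdec n).le h1)
    exact fun y hy => closure_minimal horb (hclosed.preimage S.pii_continuous) hy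
  · -- equivariance
    intro g y hy
    funext n
    obtain ⟨g₀, hg₀⟩ := S.matching hy
      (((S.E_finite n).image (fun e => g⁻¹ * e)).union (S.E_finite n))
    have h1 : S.pii y n = ↑g₀ := S.pii_eq (fun e he => hg₀ e (Or.inr he))
    have h2 : S.pii (shiftAct g y) n = ↑(g * g₀) := by
      apply S.pii_eq
      intro e he
      show y (g⁻¹ * e) = S.xel ((g * g₀)⁻¹ * e)
      have h3 : y (g⁻¹ * e) = S.xel (g₀⁻¹ * (g⁻¹ * e)) := hg₀ _ (Or.inl ⟨e, he, rfl⟩)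
      rw [h3]
      congr 1
      group
    rw [h2]
    show (↑(g * g₀) : G ⧸ Γ n) = g • (S.pii y n)
    rw [h1]
    rfl
  · -- SurjOn
    intro z hz
    have hXcompact : IsCompact (orbitClosure S.xel) := isClosed_closure.isCompact
    have himg_closed : IsClosed (S.pii '' orbitClosure S.xel) :=
      (hXcompact.image S.pii_continuous).isClosed
    have hconsts : {w : Π n, G ⧸ Γ n | ∃ g : G, w = fun n => ↑g}
        ⊆ S.pii '' orbitClosure S.xel := by
      rintro _ ⟨g, rfl⟩
      exact ⟨shiftAct g S.xel, subset_closure ⟨g, rfl⟩, funext (S.pii_shift g)⟩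
    exact closure_minimal hconsts himg_closed (hdense z hz)
  · -- almost one-to-one
    intro z hz
    have hD : {w : Π n, G ⧸ Γ n | ∃ g : G, w = fun n => ↑g}
        ⊆ {z' | z' ∈ odometerSet Γ ∧
            ∃! y : G → Bool, y ∈ orbitClosure S.xel ∧ S.pii y = z'} := by
      rintro _ ⟨g, rfl⟩
      refine ⟨hconst_mem g,
        ⟨shiftAct g S.xel, ⟨subset_closure ⟨g, rfl⟩, funext (S.pii_shift g)⟩, ?_⟩⟩
      rintro y ⟨hyX, hypi⟩
      exact S.unique_fiber g hyX (fun n => congrFun hypi n)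
    exact closure_mono hD (hdense z hz)
end

section
/- Let x ∈ Σ^G be a Toeplitz element with period structure (Γₙ)ₙ and let X = orbit closure of x. For each n set Bₙ = {y ∈ X : Per(y,Γₙ,α) = Per(x,Γₙ,α) for all α ∈ Σ}. Then for g, h ∈ G the following are equivalent: (1) gBₙ ∩ hBₙ ≠ ∅; (2) gBₙ = hBₙ; (3) gΓₙ = hΓₙ. Consequently {g⁻¹Bₙ : g ∈ Dₙ⁻¹} is a clopen partition of X for any set Dₙ of representatives of the right cosets {Γₙg}, and the map π : X → lim← G/Γₙ sending y to (gₙΓₙ)ₙ where y ∈ gₙBₙ is an almost one-to-one factor map onto the G-odometer. -/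
/-- `Per(x,Γ,α) = {g : x(γg) = α for all γ ∈ Γ}`. -/
def Per {G A : Type*} [Group G] (x : G → A) (Γ : Subgroup G) (α : A) : Set G :=
  {g : G | ∀ γ ∈ Γ, x (γ * g) = α}

/-- Γ is an essential period of x. -/
def IsEssentialPeriod {G A : Type*} [Group G] (x : G → A) (Γ : Subgroup G) : Prop :=
  ∀ g : G, (∀ α : A, Per x Γ α ⊆ Per (shiftAct g x) Γ α) → g ∈ Γ

/-- The set Bₙ of elements of the orbit closure having the same Γₙ-periodic part as x. -/
def Bset {G A : Type*} [Group G] [TopologicalSpace A] (x : G → A)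
    (Γ : Subgroup G) : Set (G → A) :=
  {y ∈ orbitClosure x | ∀ α : A, Per y Γ α = Per x Γ α}

/-! ### Auxiliary definitions and lemmas -/

/-- The set of `y` whose `Γ`-periodic parts contain those of `x`. -/
def Cset {G A : Type*} [Group G] (x : G → A) (Γ : Subgroup G) : Set (G → A) :=
  {y | ∀ α : A, Per x Γ α ⊆ Per y Γ α}

set_option linter.unusedSectionVars false

section Aux

variable {G A : Type*} [Group G]

lemma sa_one (y : G → A) : shiftAct (1 : G) y = y := by
  funext h; simp [shiftAct]

lemma sa_mul (g h : G) (y : G → A) :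
    shiftAct (g * h) y = shiftAct g (shiftAct h y) := by
  funext k; simp [shiftAct, mul_assoc]

lemma sa_cancel (g : G) (y : G → A) : shiftAct g⁻¹ (shiftAct g y) = y := by
  rw [← sa_mul, inv_mul_cancel, sa_one]

lemma sa_cancel' (g : G) (y : G → A) : shiftAct g (shiftAct g⁻¹ y) = y := by
  rw [← sa_mul, mul_inv_cancel, sa_one]

lemma per_value {y : G → A} {Γ : Subgroup G} {α : A} {m : G}
    (hm : m ∈ Per y Γ α) : y m = α := by
  simpa using hm 1 Γ.one_mem

lemma per_left {y : G → A} {Γ : Subgroup G} {α : A} {m γ : G} (hγ : γ ∈ Γ)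
    (hm : m ∈ Per y Γ α) : γ * m ∈ Per y Γ α := by
  intro δ hδ
  rw [← mul_assoc]
  exact hm (δ * γ) (Γ.mul_mem hδ hγ)

lemma per_shift {y : G → A} {Γ : Subgroup G} {γ : G} (hγ : γ ∈ Γ) (α : A) :
    Per (shiftAct γ y) Γ α = Per y Γ α := by
  ext m
  constructor
  · intro hm δ hδ
    have := hm (γ * δ) (Γ.mul_mem hγ hδ)
    simpa [shiftAct, mul_assoc] using this
  · intro hm δ hδ
    show y (γ⁻¹ * (δ * m)) = α
    rw [← mul_assoc]
    exact hm (γ⁻¹ * δ) (Γ.mul_mem (Γ.inv_mem hγ) hδ)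

lemma per_mono {x : G → A} {Γ' Γ : Subgroup G} (h : Γ' ≤ Γ) (α : A) :
    Per x Γ α ⊆ Per x Γ' α := fun _ hm γ hγ => hm γ (h hγ)

lemma x_mem_Cset (x : G → A) (Γ : Subgroup G) : x ∈ Cset x Γ := fun _ => le_refl _

lemma Cset_shift {x y : G → A} {Γ : Subgroup G} (hy : y ∈ Cset x Γ) {γ : G}
    (hγ : γ ∈ Γ) : shiftAct γ y ∈ Cset x Γ := fun α => by
  rw [per_shift hγ]; exact hy α

variable [TopologicalSpace A]

lemma sa_continuous (g : G) : Continuous (shiftAct g : (G → A) → (G → A)) :=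
  continuous_pi fun _ => continuous_apply _

lemma sa_image_eq (g : G) (S : Set (G → A)) :
    shiftAct g '' S = shiftAct g⁻¹ ⁻¹' S := by
  ext z
  constructor
  · rintro ⟨u, hu, rfl⟩
    simpa [Set.mem_preimage, sa_cancel] using hu
  · intro hz
    exact ⟨shiftAct g⁻¹ z, hz, sa_cancel' g z⟩

lemma mem_orbitClosure_self (x : G → A) : x ∈ orbitClosure x :=
  subset_closure ⟨1, (sa_one x).symm⟩

lemma orbitClosure_smul {x : G → A} (g : G) {y : G → A}
    (hy : y ∈ orbitClosure x) : shiftAct g y ∈ orbitClosure x := by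
  have h1 : shiftAct g y ∈ closure (shiftAct g '' {y : G → A | ∃ t, y = shiftAct t x}) :=
    image_closure_subset_closure_image (sa_continuous g) ⟨y, hy, rfl⟩
  refine closure_mono ?_ h1
  rintro z ⟨u, ⟨t, rfl⟩, rfl⟩
  exact ⟨g * t, (sa_mul g t x).symm⟩

variable [DiscreteTopology A]

lemma isClosed_value (c : G) (α : A) : IsClosed {y : G → A | y c = α} := by
  have : {y : G → A | y c = α} = (fun y : G → A => y c) ⁻¹' {α} := rfl
  rw [this]
  exact (isClosed_discrete _).preimage (continuous_apply c)

lemma isClosed_Cset (x : G → A) (Γ : Subgroup G) : IsClosed (Cset x Γ) := by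
  have : Cset x Γ = ⋂ (α : A), ⋂ (m : G), ⋂ (_ : m ∈ Per x Γ α), ⋂ (γ : G),
      ⋂ (_ : γ ∈ Γ), {y : G → A | y (γ * m) = α} := by
    ext y
    simp only [Set.mem_iInter, Set.mem_setOf_eq]
    exact ⟨fun h α m hm γ hγ => h α hm γ hγ, fun h α m hm γ hγ => h α m hm γ hγ⟩
  rw [this]
  exact isClosed_iInter fun α => isClosed_iInter fun m => isClosed_iInter fun _ =>
    isClosed_iInter fun γ => isClosed_iInter fun _ => isClosed_value _ _

lemma x_mem_Bset (x : G → A) (Γ : Subgroup G) : x ∈ Bset x Γ :=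
  ⟨mem_orbitClosure_self x, fun _ => rfl⟩

lemma Bset_smul {x : G → A} {Γ : Subgroup G} {u : G → A} (hu : u ∈ Bset x Γ)
    {γ : G} (hγ : γ ∈ Γ) : shiftAct γ u ∈ Bset x Γ :=
  ⟨orbitClosure_smul γ hu.1, fun α => by rw [per_shift hγ]; exact hu.2 α⟩

lemma smul_Bset_subset {x : G → A} {Γ : Subgroup G} {g h : G} (hgh : h⁻¹ * g ∈ Γ) :
    shiftAct g '' Bset x Γ ⊆ shiftAct h '' Bset x Γ := by
  rintro z ⟨u, hu, rfl⟩
  exact ⟨shiftAct (h⁻¹ * g) u, Bset_smul hu hgh, by rw [← sa_mul, mul_inv_cancel_left]⟩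

lemma smul_Bset_eq {x : G → A} {Γ : Subgroup G} {g h : G} (hgh : g⁻¹ * h ∈ Γ) :
    shiftAct g '' Bset x Γ = shiftAct h '' Bset x Γ := by
  refine Set.Subset.antisymm (smul_Bset_subset ?_) (smul_Bset_subset hgh)
  simpa using Γ.inv_mem hgh

lemma Bset_mem_Cset {x : G → A} {Γ : Subgroup G} {u : G → A} (hu : u ∈ Bset x Γ) :
    u ∈ Cset x Γ := fun α => by rw [hu.2 α]

end Aux

section Main

variable {G A : Type*} [Group G] [Countable G]
  [TopologicalSpace A] [DiscreteTopology A] [Finite A]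
  {x : G → A} {Γ : ℕ → Subgroup G}

lemma exists_level (hcover : (⋃ n : ℕ, ⋃ α : A, Per x (Γ n) α) = Set.univ) (g : G) :
    ∃ n, g ∈ Per x (Γ n) (x g) := by
  have hmem : g ∈ ⋃ n : ℕ, ⋃ α : A, Per x (Γ n) α := hcover ▸ Set.mem_univ g
  obtain ⟨n, α, hn⟩ : ∃ n α, g ∈ Per x (Γ n) α := by
    simpa [Set.mem_iUnion] using hmem
  exact ⟨n, by rwa [per_value hn]⟩

lemma exists_level_finset (hdec : ∀ n, Γ (n + 1) ≤ Γ n)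
    (hcover : (⋃ n : ℕ, ⋃ α : A, Per x (Γ n) α) = Set.univ) (F : Finset G) :
    ∃ n, ∀ f ∈ F, ∀ γ ∈ Γ n, x (γ * f) = x f := by
  classical
  have hanti : Antitone Γ := antitone_nat_of_succ_le hdec
  induction F using Finset.induction with
  | empty => exact ⟨0, by simp⟩
  | @insert a F _ ih =>
    obtain ⟨n₁, h₁⟩ := ih
    obtain ⟨n₂, h₂⟩ := exists_level hcover a
    refine ⟨max n₁ n₂, fun f hf γ hγ => ?_⟩
    rcases Finset.mem_insert.mp hf with rfl | hf
    · exact h₂ γ (hanti (le_max_right n₁ n₂) hγ)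
    · exact h₁ f hf γ (hanti (le_max_left n₁ n₂) hγ)

lemma min_lemma (hdec : ∀ n, Γ (n + 1) ≤ Γ n)
    (hfi : ∀ n, (Γ n).FiniteIndex)
    (hcover : (⋃ n : ℕ, ⋃ α : A, Per x (Γ n) α) = Set.univ)
    {y : G → A} (hy : y ∈ orbitClosure x) (F : Finset G) :
    ∃ t : G, ∀ f ∈ F, shiftAct t y f = x f := by
  obtain ⟨m, hm⟩ := exists_level_finset hdec hcover F
  haveI := hfi m
  haveI : Finite (G ⧸ Γ m) := (Γ m).finite_quotient_of_finiteIndex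
  set L : Set G := Set.range (fun c : G ⧸ Γ m => c.out) with hL
  have hLfin : L.Finite := Set.finite_range _
  set E : Set G := (fun p : G × G => p.1 * p.2) '' (L ×ˢ (F : Set G)) with hEdef
  have hEfin : E.Finite := (hLfin.prod F.finite_toSet).image _
  set U : Set (G → A) := ⋂ e ∈ E, {z : G → A | z e = y e} with hU
  have hUopen : IsOpen U :=
    hEfin.isOpen_biInter fun e _ => by
      have : {z : G → A | z e = y e} = (fun z : G → A => z e) ⁻¹' {y e} := rfl
      rw [this]
      exact (isOpen_discrete _).preimage (continuous_apply e)
  have hyU : y ∈ U := Set.mem_iInter₂.mpr fun e _ => rfl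
  obtain ⟨z, hzU, s, rfl⟩ := mem_closure_iff.mp hy U hUopen hyU
  set ℓ : G := (QuotientGroup.mk s : G ⧸ Γ m).out with hℓ
  have hv : ℓ⁻¹ * s ∈ Γ m :=
    QuotientGroup.eq.mp (QuotientGroup.out_eq' (QuotientGroup.mk s : G ⧸ Γ m))
  refine ⟨ℓ⁻¹, fun f hf => ?_⟩
  have hmemE : ℓ * f ∈ E := ⟨(ℓ, f), ⟨Set.mem_range_self _, hf⟩, rfl⟩
  have hagree : (shiftAct s x) (ℓ * f) = y (ℓ * f) := Set.mem_iInter₂.mp hzU _ hmemE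
  have hval : x (s⁻¹ * (ℓ * f)) = y (ℓ * f) := hagree
  have hkey : s⁻¹ * (ℓ * f) = (ℓ⁻¹ * s)⁻¹ * f := by group
  have : shiftAct ℓ⁻¹ y f = y (ℓ * f) := by simp [shiftAct]
  rw [this, ← hval, hkey]
  exact hm f hf _ ((Γ m).inv_mem hv)

lemma x_mem_closure_orbit (hdec : ∀ n, Γ (n + 1) ≤ Γ n)
    (hfi : ∀ n, (Γ n).FiniteIndex)
    (hcover : (⋃ n : ℕ, ⋃ α : A, Per x (Γ n) α) = Set.univ)
    {y : G → A} (hy : y ∈ orbitClosure x) :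
    x ∈ closure {z : G → A | ∃ t : G, z = shiftAct t y} := by
  rw [mem_closure_iff]
  intro U hUopen hxU
  obtain ⟨I, u, hIu, hsub⟩ := isOpen_pi_iff.mp hUopen x hxU
  obtain ⟨t, ht⟩ := min_lemma hdec hfi hcover hy I
  refine ⟨shiftAct t y, hsub (Set.mem_pi.mpr fun i hi => ?_), ⟨t, rfl⟩⟩
  rw [ht i hi]
  exact (hIu i hi).2

lemma exists_closure_of_iUnion {Z : Type*} [TopologicalSpace Z] {ι : Type*}
    [Finite ι] {S : ι → Set Z} {p : Z} (hp : p ∈ closure (⋃ i, S i)) :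
    ∃ i, p ∈ closure (S i) := by
  by_contra h
  push_neg at h
  have hcl : IsClosed (⋃ i, closure (S i)) :=
    isClosed_iUnion_of_finite fun i => isClosed_closure
  have hsub : closure (⋃ i, S i) ⊆ ⋃ i, closure (S i) :=
    closure_minimal (Set.iUnion_mono fun i => subset_closure) hcl
  obtain ⟨i, hi⟩ := Set.mem_iUnion.mp (hsub hp)
  exact h i hi

lemma mem_Gamma_of_closure {Γ₀ : Subgroup G} (hessΓ : IsEssentialPeriod x Γ₀)
    {S : Set (G → A)} {k : G} (hS : ∀ z ∈ S, shiftAct k z ∈ Cset x Γ₀)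
    (hx : x ∈ closure S) : k ∈ Γ₀ := by
  have h1 : shiftAct k x ∈ closure (shiftAct k '' S) :=
    image_closure_subset_closure_image (sa_continuous k) ⟨x, hx, rfl⟩
  have h2 : shiftAct k x ∈ Cset x Γ₀ := by
    have hsub : closure (shiftAct k '' S) ⊆ Cset x Γ₀ :=
      closure_minimal (by rintro z ⟨u, hu, rfl⟩; exact hS u hu) (isClosed_Cset x Γ₀)
    exact hsub h1
  exact hessΓ k h2

lemma ml2 (hdec : ∀ n, Γ (n + 1) ≤ Γ n)
    (hfi : ∀ n, (Γ n).FiniteIndex)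
    (hcover : (⋃ n : ℕ, ⋃ α : A, Per x (Γ n) α) = Set.univ)
    {n : ℕ} (hess_n : IsEssentialPeriod x (Γ n))
    {y : G → A} (hy : y ∈ orbitClosure x) (hyC : y ∈ Cset x (Γ n))
    {w : G} (hwC : shiftAct w⁻¹ y ∈ Cset x (Γ n)) : w ∈ Γ n := by
  haveI := hfi n
  haveI : Finite (G ⧸ Γ n) := (Γ n).finite_quotient_of_finiteIndex
  set S : (G ⧸ Γ n) × (G ⧸ Γ n) → Set (G → A) := fun c =>
    {z | ∃ t : G, z = shiftAct t y ∧ (t : G ⧸ Γ n) = c.1 ∧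
      ((t * w : G) : G ⧸ Γ n) = c.2} with hSdef
  have hx' : x ∈ closure (⋃ c, S c) := by
    refine closure_mono ?_ (x_mem_closure_orbit hdec hfi hcover hy)
    rintro z ⟨t, rfl⟩
    exact Set.mem_iUnion.mpr ⟨((t : G ⧸ Γ n), ((t * w : G) : G ⧸ Γ n)), t, rfl, rfl, rfl⟩
  obtain ⟨c, hc⟩ := exists_closure_of_iUnion hx'
  have hne : (S c).Nonempty := closure_nonempty_iff.mp ⟨x, hc⟩
  obtain ⟨z₀, t₀, rfl, ht₀1, ht₀2⟩ := hne
  have ha : t₀⁻¹ ∈ Γ n := by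
    refine mem_Gamma_of_closure hess_n ?_ hc
    rintro z ⟨t, rfl, ht1, ht2⟩
    have hmem : t₀⁻¹ * t ∈ Γ n := QuotientGroup.eq.mp (ht₀1.trans ht1.symm)
    rw [← sa_mul]
    exact Cset_shift hyC hmem
  have hb : (t₀ * w)⁻¹ ∈ Γ n := by
    refine mem_Gamma_of_closure hess_n ?_ hc
    rintro z ⟨t, rfl, ht1, ht2⟩
    have hmem : (t₀ * w)⁻¹ * (t * w) ∈ Γ n := QuotientGroup.eq.mp (ht₀2.trans ht2.symm)
    have hrw : shiftAct (t₀ * w)⁻¹ (shiftAct t y) =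
        shiftAct ((t₀ * w)⁻¹ * (t * w)) (shiftAct w⁻¹ y) := by
      rw [← sa_mul, ← sa_mul]
      congr 1
      group
    rw [hrw]
    exact Cset_shift hwC hmem
  have hw : w = t₀⁻¹ * (t₀ * w) := by group
  rw [hw]
  exact (Γ n).mul_mem ha ((Γ n).inv_mem_iff.mp hb)

lemma key_closure (hdec : ∀ n, Γ (n + 1) ≤ Γ n)
    (hfi : ∀ n, (Γ n).FiniteIndex)
    (hcover : (⋃ n : ℕ, ⋃ α : A, Per x (Γ n) α) = Set.univ)
    {n : ℕ} (hess_n : IsEssentialPeriod x (Γ n))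
    {y : G → A} (hy : y ∈ orbitClosure x) (hyC : y ∈ Cset x (Γ n)) :
    x ∈ closure {z : G → A | ∃ γ ∈ Γ n, z = shiftAct γ y} := by
  haveI := hfi n
  haveI : Finite (G ⧸ Γ n) := (Γ n).finite_quotient_of_finiteIndex
  set S : (G ⧸ Γ n) → Set (G → A) := fun c =>
    {z | ∃ t : G, z = shiftAct t y ∧ (t : G ⧸ Γ n) = c} with hSdef
  have hx' : x ∈ closure (⋃ c, S c) := by
    refine closure_mono ?_ (x_mem_closure_orbit hdec hfi hcover hy)
    rintro z ⟨t, rfl⟩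
    exact Set.mem_iUnion.mpr ⟨(t : G ⧸ Γ n), t, rfl, rfl⟩
  obtain ⟨c, hc⟩ := exists_closure_of_iUnion hx'
  have hne : (S c).Nonempty := closure_nonempty_iff.mp ⟨x, hc⟩
  obtain ⟨z₀, t₀, rfl, ht₀⟩ := hne
  have ha : t₀⁻¹ ∈ Γ n := by
    refine mem_Gamma_of_closure hess_n ?_ hc
    rintro z ⟨t, rfl, ht1⟩
    have hmem : t₀⁻¹ * t ∈ Γ n := QuotientGroup.eq.mp (ht₀.trans ht1.symm)
    rw [← sa_mul]
    exact Cset_shift hyC hmem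
  refine closure_mono ?_ hc
  rintro z ⟨t, rfl, ht1⟩
  have h1 : t₀⁻¹ * t ∈ Γ n := QuotientGroup.eq.mp (ht₀.trans ht1.symm)
  have h2 : t₀ ∈ Γ n := (Γ n).inv_mem_iff.mp ha
  have h3 : t ∈ Γ n := by
    have := (Γ n).mul_mem h2 h1
    simpa [mul_inv_cancel_left] using this
  exact ⟨t, h3, rfl⟩

lemma per_eq_of_Cset (hdec : ∀ n, Γ (n + 1) ≤ Γ n)
    (hfi : ∀ n, (Γ n).FiniteIndex)
    (hcover : (⋃ n : ℕ, ⋃ α : A, Per x (Γ n) α) = Set.univ)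
    {n : ℕ} (hess_n : IsEssentialPeriod x (Γ n))
    {y : G → A} (hy : y ∈ orbitClosure x) (hyC : y ∈ Cset x (Γ n)) (α : A) :
    Per y (Γ n) α = Per x (Γ n) α := by
  refine Set.Subset.antisymm ?_ (hyC α)
  intro g hg γ hγ
  have hx' := key_closure hdec hfi hcover hess_n hy hyC
  have hsub : {z : G → A | ∃ δ ∈ Γ n, z = shiftAct δ y} ⊆ {z : G → A | z (γ * g) = α} := by
    rintro z ⟨δ, hδ, rfl⟩
    show y (δ⁻¹ * (γ * g)) = α
    rw [← mul_assoc]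
    exact hg _ ((Γ n).mul_mem ((Γ n).inv_mem hδ) hγ)
  have hx'' : x ∈ closure {z : G → A | z (γ * g) = α} := closure_mono hsub hx'
  have := (isClosed_value (γ * g) α).closure_eq ▸ hx''
  exact this

lemma Bset_eq_inter (hdec : ∀ n, Γ (n + 1) ≤ Γ n)
    (hfi : ∀ n, (Γ n).FiniteIndex)
    (hcover : (⋃ n : ℕ, ⋃ α : A, Per x (Γ n) α) = Set.univ)
    {n : ℕ} (hess_n : IsEssentialPeriod x (Γ n)) :
    Bset x (Γ n) = orbitClosure x ∩ Cset x (Γ n) := by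
  ext y
  constructor
  · rintro ⟨hyX, hyP⟩
    exact ⟨hyX, fun α => by rw [hyP α]⟩
  · rintro ⟨hyX, hyC⟩
    exact ⟨hyX, fun α => per_eq_of_Cset hdec hfi hcover hess_n hyX hyC α⟩

lemma isClosed_Bset (hdec : ∀ n, Γ (n + 1) ≤ Γ n)
    (hfi : ∀ n, (Γ n).FiniteIndex)
    (hcover : (⋃ n : ℕ, ⋃ α : A, Per x (Γ n) α) = Set.univ)
    {n : ℕ} (hess_n : IsEssentialPeriod x (Γ n)) :
    IsClosed (Bset x (Γ n)) := by
  rw [Bset_eq_inter hdec hfi hcover hess_n]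
  exact isClosed_closure.inter (isClosed_Cset x (Γ n))

lemma coset_eq_of_nonempty (hdec : ∀ n, Γ (n + 1) ≤ Γ n)
    (hfi : ∀ n, (Γ n).FiniteIndex)
    (hcover : (⋃ n : ℕ, ⋃ α : A, Per x (Γ n) α) = Set.univ)
    {n : ℕ} (hess_n : IsEssentialPeriod x (Γ n)) {g h : G}
    (hne : (shiftAct g '' Bset x (Γ n) ∩ shiftAct h '' Bset x (Γ n)).Nonempty) :
    (g : G ⧸ Γ n) = (h : G ⧸ Γ n) := by
  obtain ⟨z, ⟨u, hu, huz⟩, ⟨v, hv, hvz⟩⟩ := hne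
  have hvu : shiftAct (g⁻¹ * h)⁻¹ u = v := by
    have h1 : (g⁻¹ * h)⁻¹ = h⁻¹ * g := by group
    rw [h1, sa_mul, huz, ← hvz, sa_cancel]
  have hmem : g⁻¹ * h ∈ Γ n := by
    refine ml2 hdec hfi hcover hess_n hu.1 (Bset_mem_Cset hu) ?_
    rw [hvu]
    exact Bset_mem_Cset hv
  exact QuotientGroup.eq.mpr hmem

lemma exists_mem_smul_Bset (hdec : ∀ n, Γ (n + 1) ≤ Γ n)
    (hfi : ∀ n, (Γ n).FiniteIndex)
    (hcover : (⋃ n : ℕ, ⋃ α : A, Per x (Γ n) α) = Set.univ)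
    {n : ℕ} (hess_n : IsEssentialPeriod x (Γ n))
    {y : G → A} (hy : y ∈ orbitClosure x) :
    ∃ g : G, y ∈ shiftAct g '' Bset x (Γ n) := by
  haveI := hfi n
  haveI : Finite (G ⧸ Γ n) := (Γ n).finite_quotient_of_finiteIndex
  set S : (G ⧸ Γ n) → Set (G → A) := fun c =>
    {z | ∃ t : G, z = shiftAct t x ∧ (t : G ⧸ Γ n) = c} with hSdef
  have hy' : y ∈ closure (⋃ c, S c) := by
    refine closure_mono ?_ hy
    rintro z ⟨t, rfl⟩
    exact Set.mem_iUnion.mpr ⟨(t : G ⧸ Γ n), t, rfl, rfl⟩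
  obtain ⟨c, hc⟩ := exists_closure_of_iUnion hy'
  refine ⟨c.out, ?_⟩
  have hclosed : IsClosed (shiftAct c.out '' Bset x (Γ n)) := by
    rw [sa_image_eq]
    exact (isClosed_Bset hdec hfi hcover hess_n).preimage (sa_continuous _)
  have hsub : S c ⊆ shiftAct c.out '' Bset x (Γ n) := by
    rintro z ⟨t, rfl, ht⟩
    have h1 : (c.out : G ⧸ Γ n) = (t : G ⧸ Γ n) := by
      rw [QuotientGroup.out_eq']; exact ht.symm
    have h2 : c.out⁻¹ * t ∈ Γ n := QuotientGroup.eq.mp h1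
    exact ⟨shiftAct (c.out⁻¹ * t) x, Bset_smul (x_mem_Bset x (Γ n)) h2,
      by rw [← sa_mul, mul_inv_cancel_left]⟩
  exact closure_minimal hsub hclosed hc

lemma eq_x_of_all_Bset (hcover : (⋃ n : ℕ, ⋃ α : A, Per x (Γ n) α) = Set.univ)
    {u : G → A} (hu : ∀ n, u ∈ Bset x (Γ n)) : u = x := by
  funext g
  obtain ⟨n, hn⟩ := exists_level hcover g
  have hmem : g ∈ Per u (Γ n) (x g) := by
    rw [(hu n).2 (x g)]
    exact hn
  exact per_value hmem

end Main

open scoped Classical in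
/-- The coding map onto the odometer. -/
noncomputable def piMap {G A : Type*} [Group G] [TopologicalSpace A]
    (x : G → A) (Γ : ℕ → Subgroup G) : (G → A) → Π n, G ⧸ Γ n := fun y n =>
  if h : ∃ g : G, y ∈ shiftAct g '' Bset x (Γ n) then (h.choose : G ⧸ Γ n)
  else ((1 : G) : G ⧸ Γ n)

section Pi

variable {G A : Type*} [Group G] [Countable G]
  [TopologicalSpace A] [DiscreteTopology A] [Finite A]
  {x : G → A} {Γ : ℕ → Subgroup G}

lemma piMap_spec (hdec : ∀ n, Γ (n + 1) ≤ Γ n)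
    (hfi : ∀ n, (Γ n).FiniteIndex)
    (hcover : (⋃ n : ℕ, ⋃ α : A, Per x (Γ n) α) = Set.univ)
    {n : ℕ} (hess_n : IsEssentialPeriod x (Γ n)) {y : G → A} {g : G}
    (hg : y ∈ shiftAct g '' Bset x (Γ n)) :
    piMap x Γ y n = (g : G ⧸ Γ n) := by
  have hex : ∃ g' : G, y ∈ shiftAct g' '' Bset x (Γ n) := ⟨g, hg⟩
  simp only [piMap, dif_pos hex]
  exact coset_eq_of_nonempty hdec hfi hcover hess_n ⟨y, hex.choose_spec, hg⟩

lemma Bset_antitone (hdec : ∀ n, Γ (n + 1) ≤ Γ n)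
    (hfi : ∀ n, (Γ n).FiniteIndex)
    (hcover : (⋃ n : ℕ, ⋃ α : A, Per x (Γ n) α) = Set.univ)
    (hess : ∀ n, IsEssentialPeriod x (Γ n)) (n : ℕ) :
    Bset x (Γ (n + 1)) ⊆ Bset x (Γ n) := by
  intro y hy
  rw [Bset_eq_inter hdec hfi hcover (hess n)]
  refine ⟨hy.1, fun α m hm γ hγ => ?_⟩
  have h1 : γ * m ∈ Per x (Γ n) α := per_left hγ hm
  have h2 : γ * m ∈ Per x (Γ (n + 1)) α := per_mono (hdec n) α h1
  have h3 : γ * m ∈ Per y (Γ (n + 1)) α := by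
    rw [hy.2 α]; exact h2
  exact per_value h3


lemma exists_mem_out_Bset (hdec : ∀ n, Γ (n + 1) ≤ Γ n)
    (hfi : ∀ n, (Γ n).FiniteIndex)
    (hcover : (⋃ n : ℕ, ⋃ α : A, Per x (Γ n) α) = Set.univ)
    {n : ℕ} (hess_n : IsEssentialPeriod x (Γ n))
    {y : G → A} (hy : y ∈ orbitClosure x) :
    ∃ c : G ⧸ Γ n, y ∈ shiftAct (Quotient.out c) '' Bset x (Γ n) := by
  obtain ⟨g, hg⟩ := exists_mem_smul_Bset hdec hfi hcover hess_n hy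
  refine ⟨(g : G ⧸ Γ n), ?_⟩
  have h1 : ((Quotient.out (g : G ⧸ Γ n) : G) : G ⧸ Γ n) = (g : G ⧸ Γ n) :=
    QuotientGroup.out_eq' _
  rw [smul_Bset_eq (QuotientGroup.eq.mp h1)]
  exact hg

lemma piMap_continuousOn (hdec : ∀ n, Γ (n + 1) ≤ Γ n)
    (hfi : ∀ n, (Γ n).FiniteIndex)
    (hcover : (⋃ n : ℕ, ⋃ α : A, Per x (Γ n) α) = Set.univ)
    (hess : ∀ n, IsEssentialPeriod x (Γ n)) :
    ContinuousOn (piMap x Γ) (orbitClosure x) := by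
  intro y hy
  rw [continuousWithinAt_pi]
  intro n
  haveI := hfi n
  haveI : Finite (G ⧸ Γ n) := (Γ n).finite_quotient_of_finiteIndex
  set K : G ⧸ Γ n → Set (G → A) :=
    fun c => shiftAct (Quotient.out c) '' Bset x (Γ n) with hKdef
  have hKclosed : ∀ c, IsClosed (K c) := by
    intro c
    rw [hKdef]
    simp only []
    rw [sa_image_eq]
    exact (isClosed_Bset hdec hfi hcover (hess n)).preimage (sa_continuous _)
  set V : Set (G → A) := (⋃ c ∈ {c : G ⧸ Γ n | y ∉ K c}, K c)ᶜ with hVdef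
  have hVopen : IsOpen V := by
    rw [hVdef]
    exact ((Set.toFinite _).isClosed_biUnion fun c _ => hKclosed c).isOpen_compl
  have hyV : y ∈ V := by
    rw [hVdef]
    intro hmem
    obtain ⟨c, hc1, hc2⟩ := Set.mem_iUnion₂.mp hmem
    exact hc1 hc2
  have hev : ∀ᶠ y' in nhdsWithin y (orbitClosure x),
      piMap x Γ y' n = piMap x Γ y n := by
    have h1 : V ∈ nhdsWithin y (orbitClosure x) :=
      nhdsWithin_le_nhds (hVopen.mem_nhds hyV)
    have h2 : orbitClosure x ∈ nhdsWithin y (orbitClosure x) := self_mem_nhdsWithin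
    filter_upwards [h1, h2] with y' hy'V hy'X
    obtain ⟨c, hc⟩ := exists_mem_out_Bset hdec hfi hcover (hess n) hy'X
    have hyc : y ∈ K c := by
      by_contra hcon
      rw [hVdef] at hy'V
      exact hy'V (Set.mem_biUnion hcon hc)
    rw [piMap_spec hdec hfi hcover (hess n) hc,
        piMap_spec hdec hfi hcover (hess n) hyc]
  exact Filter.Tendsto.congr' (hev.mono fun _ h => h.symm) tendsto_const_nhds

end Pi

/-! ### Main theorem -/

/-- properties of the sets Bₙ attached to a period structure of a Toeplitz
element, the induced clopen partitions, and the almost one-to-one factor map onto the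
G-odometer. -/
theorem stmt_16 {G A : Type*} [Group G] [Countable G]
    [TopologicalSpace A] [DiscreteTopology A] [Finite A]
    (x : G → A) (hx : IsToeplitz x)
    (Γ : ℕ → Subgroup G)
    (hfi : ∀ n, (Γ n).FiniteIndex)
    (hdec : ∀ n, Γ (n + 1) ≤ Γ n)
    (hess : ∀ n, IsEssentialPeriod x (Γ n))
    (hcover : (⋃ n : ℕ, ⋃ α : A, Per x (Γ n) α) = Set.univ)
    (D : ℕ → Finset G)
    (hreps : ∀ (n : ℕ) (g : G), ∃! d : G, d ∈ D n ∧ d * g⁻¹ ∈ Γ n) :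
    -- Bₙ is closed
    (∀ n, IsClosed (Bset x (Γ n))) ∧
    -- the three equivalent conditions for translates of Bₙ
    (∀ (n : ℕ) (g h : G),
      ((shiftAct g '' Bset x (Γ n) ∩ shiftAct h '' Bset x (Γ n)).Nonempty ↔
        shiftAct g '' Bset x (Γ n) = shiftAct h '' Bset x (Γ n)) ∧
      ((shiftAct g '' Bset x (Γ n) ∩ shiftAct h '' Bset x (Γ n)).Nonempty ↔
        (g : G ⧸ Γ n) = (h : G ⧸ Γ n))) ∧
    -- {g⁻¹Bₙ : g ∈ Dₙ⁻¹} is a clopen partition of X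
    (∀ n : ℕ,
      (Set.PairwiseDisjoint (D n : Set G) fun d => shiftAct d⁻¹ '' Bset x (Γ n)) ∧
      (⋃ d ∈ D n, shiftAct d⁻¹ '' Bset x (Γ n)) = orbitClosure x) ∧
    -- the coordinatewise coding map is an almost one-to-one factor onto the odometer
    (∃ π : (G → A) → (Π n, G ⧸ Γ n),
      (∀ y ∈ orbitClosure x, ∀ (n : ℕ) (g : G),
        y ∈ shiftAct g '' Bset x (Γ n) → π y n = (g : G ⧸ Γ n)) ∧
      ContinuousOn π (orbitClosure x) ∧
      Set.MapsTo π (orbitClosure x) (odometerSet Γ) ∧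
      (∀ g : G, ∀ y ∈ orbitClosure x, π (shiftAct g y) = g • π y) ∧
      Set.SurjOn π (orbitClosure x) (odometerSet Γ) ∧
      (∀ z ∈ odometerSet Γ,
        z ∈ closure {z' | z' ∈ odometerSet Γ ∧
          ∃! y : G → A, y ∈ orbitClosure x ∧ π y = z'})) := by
  classical
  have hBclosed : ∀ n, IsClosed (Bset x (Γ n)) := fun n =>
    isClosed_Bset hdec hfi hcover (hess n)
  have hEb : ∀ (n : ℕ) (g h : G),
      (shiftAct g '' Bset x (Γ n) ∩ shiftAct h '' Bset x (Γ n)).Nonempty →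
      (g : G ⧸ Γ n) = (h : G ⧸ Γ n) := fun n g h hne =>
    coset_eq_of_nonempty hdec hfi hcover (hess n) hne
  have hEa : ∀ (n : ℕ) (g h : G), (g : G ⧸ Γ n) = (h : G ⧸ Γ n) →
      shiftAct g '' Bset x (Γ n) = shiftAct h '' Bset x (Γ n) := fun n g h he =>
    smul_Bset_eq (QuotientGroup.eq.mp he)
  have hnonempty : ∀ (n : ℕ) (g : G), (shiftAct g '' Bset x (Γ n)).Nonempty :=
    fun n g => ⟨shiftAct g x, x, x_mem_Bset x (Γ n), rfl⟩
  -- properties of the coding map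
  have hP1 : ∀ y ∈ orbitClosure x, ∀ (n : ℕ) (g : G),
      y ∈ shiftAct g '' Bset x (Γ n) → piMap x Γ y n = (g : G ⧸ Γ n) :=
    fun y _ n g hg => piMap_spec hdec hfi hcover (hess n) hg
  have hmaps : Set.MapsTo (piMap x Γ) (orbitClosure x) (odometerSet Γ) := by
    intro y hy
    intro n g hgq
    obtain ⟨g₁, hg₁⟩ := exists_mem_smul_Bset hdec hfi hcover (hess (n + 1)) hy
    have e1 : piMap x Γ y (n + 1) = (g₁ : G ⧸ Γ (n + 1)) :=
      piMap_spec hdec hfi hcover (hess (n + 1)) hg₁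
    have hg₁n : y ∈ shiftAct g₁ '' Bset x (Γ n) :=
      Set.image_mono (Bset_antitone hdec hfi hcover hess n) hg₁
    have e2 : piMap x Γ y n = (g₁ : G ⧸ Γ n) :=
      piMap_spec hdec hfi hcover (hess n) hg₁n
    have hmem : g₁⁻¹ * g ∈ Γ (n + 1) := QuotientGroup.eq.mp (e1.symm.trans hgq)
    rw [e2]
    exact QuotientGroup.eq.mpr (hdec n hmem)
  have hequiv : ∀ g : G, ∀ y ∈ orbitClosure x,
      piMap x Γ (shiftAct g y) = g • piMap x Γ y := by
    intro g y hy
    funext n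
    obtain ⟨gₙ, hgₙ⟩ := exists_mem_smul_Bset hdec hfi hcover (hess n) hy
    have e1 : piMap x Γ y n = (gₙ : G ⧸ Γ n) := piMap_spec hdec hfi hcover (hess n) hgₙ
    have hgy : shiftAct g y ∈ shiftAct (g * gₙ) '' Bset x (Γ n) := by
      obtain ⟨u, hu, huy⟩ := hgₙ
      exact ⟨u, hu, by rw [sa_mul, huy]⟩
    have e2 : piMap x Γ (shiftAct g y) n = ((g * gₙ : G) : G ⧸ Γ n) :=
      piMap_spec hdec hfi hcover (hess n) hgy
    rw [e2, Pi.smul_apply, e1]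
    rfl
  have hpit : ∀ (t : G) (n : ℕ), piMap x Γ (shiftAct t x) n = (t : G ⧸ Γ n) :=
    fun t n => piMap_spec hdec hfi hcover (hess n) ⟨x, x_mem_Bset x (Γ n), rfl⟩
  have huniq : ∀ (t : G), ∀ y ∈ orbitClosure x,
      piMap x Γ y = piMap x Γ (shiftAct t x) → y = shiftAct t x := by
    intro t y hy hpi
    have hBall : ∀ n, shiftAct t⁻¹ y ∈ Bset x (Γ n) := by
      intro n
      obtain ⟨gₙ, hgₙ⟩ := exists_mem_smul_Bset hdec hfi hcover (hess n) hy
      have e1 : piMap x Γ y n = (gₙ : G ⧸ Γ n) :=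
        piMap_spec hdec hfi hcover (hess n) hgₙ
      have he : (gₙ : G ⧸ Γ n) = (t : G ⧸ Γ n) := by
        rw [← e1, hpi, hpit t n]
      have hmem2 : y ∈ shiftAct t '' Bset x (Γ n) := by
        rw [← hEa n gₙ t he]
        exact hgₙ
      obtain ⟨v, hv, hvy⟩ := hmem2
      have hveq : shiftAct t⁻¹ y = v := by rw [← hvy, sa_cancel]
      rw [hveq]
      exact hv
    have hxx := eq_x_of_all_Bset hcover hBall
    have h2 := congrArg (shiftAct t) hxx
    rwa [sa_cancel'] at h2
  have hsurj : Set.SurjOn (piMap x Γ) (orbitClosure x) (odometerSet Γ) := by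
    intro z hz
    set gseq : ℕ → G := fun n => Quotient.out (z n) with hgseq
    have hout : ∀ n, ((gseq n : G) : G ⧸ Γ n) = z n := fun n => QuotientGroup.out_eq' (z n)
    have hcoh : ∀ n, ((gseq (n + 1) : G) : G ⧸ Γ n) = ((gseq n : G) : G ⧸ Γ n) := by
      intro n
      have h1 : z (n + 1) = ((gseq (n + 1) : G) : G ⧸ Γ (n + 1)) := (hout (n + 1)).symm
      have h2 : z n = ((gseq (n + 1) : G) : G ⧸ Γ n) := hz n (gseq (n + 1)) h1
      rw [← h2, hout n]
    set K : ℕ → Set (G → A) := fun n => shiftAct (gseq n) '' Bset x (Γ n) with hKdef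
    have hKclosed : ∀ n, IsClosed (K n) := by
      intro n
      rw [hKdef]
      simp only []
      rw [sa_image_eq]
      exact (hBclosed n).preimage (sa_continuous _)
    have hKdec : ∀ n, K (n + 1) ⊆ K n := by
      intro n
      have h1 : K (n + 1) ⊆ shiftAct (gseq (n + 1)) '' Bset x (Γ n) :=
        Set.image_mono (Bset_antitone hdec hfi hcover hess n)
      rwa [hEa n (gseq (n + 1)) (gseq n) (hcoh n)] at h1
    have hKne : ∀ n, (K n).Nonempty := fun n => ⟨_, x, x_mem_Bset x (Γ n), rfl⟩
    have hKcpt : ∀ n, IsCompact (K n) := fun n => (hKclosed n).isCompact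
    obtain ⟨y, hy⟩ :=
      IsCompact.nonempty_iInter_of_sequence_nonempty_isCompact_isClosed K hKdec hKne (hKcpt 0) hKclosed
    have hyX : y ∈ orbitClosure x := by
      have h0 : y ∈ K 0 := Set.mem_iInter.mp hy 0
      obtain ⟨u, hu, rfl⟩ := h0
      exact orbitClosure_smul _ hu.1
    refine ⟨y, hyX, funext fun n => ?_⟩
    rw [piMap_spec hdec hfi hcover (hess n) (Set.mem_iInter.mp hy n), hout n]
  refine ⟨hBclosed, ?_, ?_, ?_⟩
  · intro n g h
    refine ⟨⟨fun hne => hEa n g h (hEb n g h hne), fun he => ?_⟩,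
      ⟨hEb n g h, fun he => ?_⟩⟩
    · obtain ⟨z, hzmem⟩ := hnonempty n g
      exact ⟨z, hzmem, he ▸ hzmem⟩
    · obtain ⟨z, hzmem⟩ := hnonempty n g
      exact ⟨z, hzmem, (hEa n g h he) ▸ hzmem⟩
  · intro n
    constructor
    · intro d hd d' hd' hne
      show Disjoint (shiftAct d⁻¹ '' Bset x (Γ n)) (shiftAct d'⁻¹ '' Bset x (Γ n))
      rw [Set.disjoint_iff_inter_eq_empty]
      by_contra hcon
      have hne2 := Set.nonempty_iff_ne_empty.mpr hcon
      have heq := hEb n d⁻¹ d'⁻¹ hne2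
      have hmem : d * d'⁻¹ ∈ Γ n := by
        have := QuotientGroup.eq.mp heq
        simpa using this
      obtain ⟨e, _, hu⟩ := hreps n d'
      have h1 : d = e := hu d ⟨hd, hmem⟩
      have h2 : d' = e := hu d' ⟨hd', by simpa using (Γ n).one_mem⟩
      exact hne (h1.trans h2.symm)
    · apply Set.Subset.antisymm
      · intro z hzmem
        simp only [Set.mem_iUnion] at hzmem
        obtain ⟨d, _, u, hu, rfl⟩ := hzmem
        exact orbitClosure_smul _ hu.1
      · intro y hy
        obtain ⟨g, hg⟩ := exists_mem_smul_Bset hdec hfi hcover (hess n) hy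
        obtain ⟨d, ⟨hdD, hdg⟩, _⟩ := hreps n g⁻¹
        have he : ((d⁻¹ : G) : G ⧸ Γ n) = (g : G ⧸ Γ n) :=
          QuotientGroup.eq.mpr (by simpa using hdg)
        refine Set.mem_biUnion hdD ?_
        rw [hEa n d⁻¹ g he]
        exact hg
  · refine ⟨piMap x Γ, hP1, piMap_continuousOn hdec hfi hcover hess, hmaps, hequiv,
      hsurj, ?_⟩
    intro z hz
    rw [mem_closure_iff]
    intro U hUopen hzU
    obtain ⟨I, u, hIu, hsub⟩ := isOpen_pi_iff.mp hUopen z hzU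
    set N : ℕ := I.sup id with hN
    set g : G := Quotient.out (z N) with hgdef
    have hNz : z N = ((g : G) : G ⧸ Γ N) := (QuotientGroup.out_eq' _).symm
    have hdown : ∀ k n, z (n + k) = ((g : G) : G ⧸ Γ (n + k)) →
        z n = ((g : G) : G ⧸ Γ n) := by
      intro k
      induction k with
      | zero => intro n h; exact h
      | succ k ih =>
        intro n h
        have h' : z ((n + k) + 1) = ((g : G) : G ⧸ Γ ((n + k) + 1)) := by
          rw [Nat.add_succ] at h
          exact h
        exact ih n (hz (n + k) g h')
    have hzi : ∀ i ∈ I, z i = ((g : G) : G ⧸ Γ i) := by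
      intro i hi
      have hle : i ≤ N := Finset.le_sup (f := id) hi
      obtain ⟨k, hk⟩ := Nat.le.dest hle
      refine hdown k i ?_
      rw [hk]
      exact hNz
    have hw : ∀ n, piMap x Γ (shiftAct g x) n = ((g : G) : G ⧸ Γ n) := hpit g
    refine ⟨piMap x Γ (shiftAct g x), hsub (Set.mem_pi.mpr fun i hi => ?_), ?_, ?_⟩
    · rw [hw i, ← hzi i hi]
      exact (hIu i hi).2
    · exact hmaps (orbitClosure_smul g (mem_orbitClosure_self x))
    · exact ⟨shiftAct g x, ⟨orbitClosure_smul g (mem_orbitClosure_self x), rfl⟩,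
        fun y' hy' => huniq g y' hy'.1 hy'.2⟩
end
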